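/- arXiv:1606.07710 — 15 statements merged into one kernel-verified Lean document; each statement's English description precedes it below -/
import Mathlib

section
/- Let (G,≾) be a compatible quasi-ordered abelian group. For every g ∈ G, the following are equivalent: (i) g is v-type; (ii) g ∼ −g; (iii) 0 ≾ g and 0 ≾ −g. Equivalently: g is o-type if and only if (¬(g ∼ −g) or g = 0), if and only if (g ≾ 0 or −g ≾ 0). -/
universe u

variable {G : Type u} [AddCommGroup G]

/-- `r` is a total quasi-order: reflexive, transitive, any two elements comparable. -/
def TotalQO (r : G → G → Prop) : Prop :=
  (∀ x, r x x) ∧ (∀ x y z, r x y → r y z → r x z) ∧ (∀ x y, r x y ∨ r y x)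

/-- Axiom (Q1): `x ∼ 0 → x = 0`. -/
def AxQ1 (r : G → G → Prop) : Prop := ∀ x, r x 0 → r 0 x → x = 0

/-- Axiom (Q2): `x ≾ y ∧ ¬(y ∼ z) → x + z ≾ y + z`. -/
def AxQ2 (r : G → G → Prop) : Prop :=
  ∀ x y z, r x y → ¬(r y z ∧ r z y) → r (x + z) (y + z)

/-- A compatible quasi-ordered abelian group: a total quasi-order satisfying (Q1) and (Q2). -/
def Compatible (r : G → G → Prop) : Prop := TotalQO r ∧ AxQ1 r ∧ AxQ2 r

/-- `g` is o-type: its `∼`-class is a singleton and `g` does not have order 2. -/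
def OType (r : G → G → Prop) (g : G) : Prop :=
  (∀ h, r h g → r g h → h = g) ∧ (g + g = 0 → g = 0)

/-- `g` is v-type: its `∼`-class is not a singleton, or `g + g = 0`. -/
def VType (r : G → G → Prop) (g : G) : Prop :=
  (∃ h, h ≠ g ∧ r h g ∧ r g h) ∨ g + g = 0

/-- in a compatible q.o.a.g, `g` is v-type iff `g ∼ -g` iff
`0 ≾ g ∧ 0 ≾ -g`; equivalently `g` is o-type iff `¬(g ∼ -g) ∨ g = 0` iff
`g ≾ 0 ∨ -g ≾ 0`. -/
theorem vtype_otype_characterization (r : G → G → Prop) (hc : Compatible r) (g : G) :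
    (VType r g ↔ (r g (-g) ∧ r (-g) g)) ∧
    (VType r g ↔ (r 0 g ∧ r 0 (-g))) ∧
    (OType r g ↔ (¬(r g (-g) ∧ r (-g) g) ∨ g = 0)) ∧
    (OType r g ↔ (r g 0 ∨ r (-g) 0)) := by
  obtain ⟨⟨hrefl, htrans, htot⟩, hq1, hq2⟩ := hc
  -- key lemma: a distinct element equivalent to g forces g ∼ -g
  have keyA : ∀ h : G, r h g → r g h → h ≠ g → (r g (-g) ∧ r (-g) g) := by
    intro h h1 h2 hne
    by_contra hng
    have hnh : ¬ (r h (-g) ∧ r (-g) h) := by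
      rintro ⟨a, b⟩
      exact hng ⟨htrans g h (-g) h2 a, htrans (-g) h g b h1⟩
    have c1 : r (h + -g) (g + -g) := hq2 h g (-g) h1 hng
    have c2 : r (g + -g) (h + -g) := hq2 g h (-g) h2 hnh
    rw [add_neg_cancel] at c1 c2
    have : h + -g = 0 := hq1 _ c1 c2
    exact hne (add_neg_eq_zero.mp this)
  -- (i) VType ↔ g ∼ -g
  have hi : VType r g ↔ (r g (-g) ∧ r (-g) g) := by
    constructor
    · rintro (⟨h, hne, h1, h2⟩ | h2)
      · exact keyA h h1 h2 hne
      · rw [neg_eq_iff_add_eq_zero.mpr h2]; exact ⟨hrefl g, hrefl g⟩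
    · rintro ⟨a, b⟩
      by_cases hg : -g = g
      · exact Or.inr (neg_eq_iff_add_eq_zero.mp hg)
      · exact Or.inl ⟨-g, hg, b, a⟩
  -- (ii) g ∼ -g ↔ 0 ≾ g ∧ 0 ≾ -g
  have hii : (r g (-g) ∧ r (-g) g) ↔ (r 0 g ∧ r 0 (-g)) := by
    constructor
    · rintro ⟨a, b⟩
      constructor
      · by_contra hn
        have hg0 : r g 0 := (htot g 0).resolve_right hn
        have hnn : ¬ (r 0 (-g) ∧ r (-g) 0) := by
          rintro ⟨c, _⟩; exact hn (htrans 0 (-g) g c b)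
        have c1 : r (g + -g) (0 + -g) := hq2 g 0 (-g) hg0 hnn
        rw [add_neg_cancel, zero_add] at c1
        exact hnn ⟨c1, htrans (-g) g 0 b hg0⟩
      · by_contra hn
        have hg0 : r (-g) 0 := (htot (-g) 0).resolve_right hn
        have hnn : ¬ (r 0 g ∧ r g 0) := by
          rintro ⟨c, _⟩; exact hn (htrans 0 g (-g) c a)
        have c1 : r (-g + g) (0 + g) := hq2 (-g) 0 g hg0 hnn
        rw [neg_add_cancel, zero_add] at c1
        exact hnn ⟨c1, htrans g (-g) 0 a hg0⟩
    · rintro ⟨h0g, h0ng⟩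
      by_cases hs : r g (-g) ∧ r (-g) g
      · exact hs
      · have c1 : r (0 + -g) (g + -g) := hq2 0 g (-g) h0g hs
        rw [add_neg_cancel, zero_add] at c1
        have hng0 : -g = 0 := hq1 _ c1 h0ng
        have hg0 : g = 0 := neg_eq_zero.mp hng0
        subst hg0
        rw [neg_zero]
        exact ⟨hrefl 0, hrefl 0⟩
  -- (iii) OType ↔ ¬(g ∼ -g) ∨ g = 0
  have hiii : OType r g ↔ (¬(r g (-g) ∧ r (-g) g) ∨ g = 0) := by
    constructor
    · rintro ⟨hsing, h2⟩
      by_cases h : r g (-g) ∧ r (-g) g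
      · exact Or.inr (h2 (neg_eq_iff_add_eq_zero.mp (hsing (-g) h.2 h.1)))
      · exact Or.inl h
    · rintro (hng | hg0)
      · refine ⟨fun h hh1 hh2 => ?_, fun hgg => ?_⟩
        · by_contra hne; exact hng (keyA h hh1 hh2 hne)
        · exact absurd (by rw [neg_eq_iff_add_eq_zero.mpr hgg]; exact ⟨hrefl g, hrefl g⟩) hng
      · subst hg0
        exact ⟨fun h a b => hq1 h a b, fun _ => rfl⟩
  refine ⟨hi, hi.trans hii, hiii, ?_⟩
  -- (iv) OType ↔ g ≾ 0 ∨ -g ≾ 0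
  constructor
  · intro ho
    rcases hiii.mp ho with hng | hg0
    · rcases not_and_or.mp (fun h => hng (hii.mpr h)) with hn | hn
      · exact Or.inl ((htot g 0).resolve_right hn)
      · exact Or.inr ((htot (-g) 0).resolve_right hn)
    · subst hg0; exact Or.inl (hrefl 0)
  · rintro (hg0 | hng0)
    · by_cases h0g : r 0 g
      · exact hiii.mpr (Or.inr (hq1 g hg0 h0g))
      · exact hiii.mpr (Or.inl fun hsim => h0g (hii.mp hsim).1)
    · by_cases h0ng : r 0 (-g)
      · exact hiii.mpr (Or.inr (neg_eq_zero.mp (hq1 (-g) hng0 h0ng)))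
      · exact hiii.mpr (Or.inl fun hsim => h0ng (hii.mp hsim).2)
end

section
/- Let (G,≾) be a compatible quasi-ordered abelian group in which ≾ is antisymmetric (i.e. ≾ is a total order). If G contains an element g of order 2 (g ≠ 0 and g + g = 0), then G = {0, g}; in particular G is isomorphic to ℤ/2ℤ. -/
universe u

variable {G : Type u} [AddCommGroup G]

/-!
Say `0 ≾ g` (the case `g ≾ 0` is the same with the roles of `0` and `g` exchanged). For `h ∉ {0, g}`,
(Q2) with antisymmetry gives `h ≾ g + h` and `g + h ≾ g + g + h = h`, so `h = g + h` and `g = 0`.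
-/

theorem AxQ2.rel_add_right {r : G → G → Prop} (hq2 : AxQ2 r)
    (hanti : ∀ x y, r x y → r y x → x = y) {x y z : G} (hxy : r x y) (hz : z ≠ y) :
    r (x + z) (y + z) :=
  hq2 x y z hxy fun hyz => hz (hanti _ _ hyz.2 hyz.1)

theorem AxQ2.eq_or_eq_add_of_rel_add {r : G → G → Prop} (hq2 : AxQ2 r)
    (hanti : ∀ x y, r x y → r y x → x = y) {a d : G} (had : r a (a + d)) (hd : d ≠ 0)
    (hd2 : d + d = 0) (z : G) : z = a ∨ z = a + d := by
  by_contra! hz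
  obtain ⟨hza, hzad⟩ := hz
  have hle : r (a + z) (a + d + z) := hq2.rel_add_right hanti had hzad
  have hge : r (a + d + z) (a + z) := by
    have hzd : z + d ≠ a + d := fun h => hza (add_right_cancel h)
    have := hq2.rel_add_right hanti had hzd
    rwa [show a + d + (z + d) = a + z + (d + d) by abel, hd2, add_zero,
      show a + (z + d) = a + d + z by abel] at this
  have heq : a + d + z = a + z := hanti _ _ hge hle
  exact hd (by simpa [add_right_comm a d z] using heq)

theorem nonempty_addEquiv_zmod_two_of_forall_eq_zero_or_eq {A : Type*} [AddGroup A] {g : A}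
    (hg : g ≠ 0) (hA : ∀ h : A, h = 0 ∨ h = g) : Nonempty (A ≃+ ZMod 2) := by
  have hcard : Nat.card A = 2 :=
    Nat.card_eq_two_iff.2 ⟨0, g, hg.symm, Set.eq_univ_of_forall hA⟩
  exact ⟨addEquivOfPrimeCardEq hcard (Nat.card_zmod 2)⟩

/-- if `≾` is a compatible quasi-order which is antisymmetric
(i.e. a total order) and `G` has an element `g` of order 2, then
`G = {0, g}`; in particular `G ≃ ℤ/2ℤ`. -/
theorem order_two_element_gives_zmod_two (r : G → G → Prop) (hc : Compatible r)
    (hanti : ∀ x y, r x y → r y x → x = y)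
    (g : G) (hg : g ≠ 0) (hg2 : g + g = 0) :
    (∀ h : G, h = 0 ∨ h = g) ∧ Nonempty (G ≃+ ZMod 2) := by
  obtain ⟨⟨-, -, htot⟩, -, hq2⟩ := hc
  have hG : ∀ h : G, h = 0 ∨ h = g := by
    intro h
    rcases htot 0 g with h0g | hg0
    · simpa using hq2.eq_or_eq_add_of_rel_add hanti (a := 0) (by simpa using h0g) hg hg2 h
    · simpa [hg2, or_comm] using
        hq2.eq_or_eq_add_of_rel_add hanti (a := g) (by simpa [hg2] using hg0) hg hg2 h
  exact ⟨hG, nonempty_addEquiv_zmod_two_of_forall_eq_zero_or_eq hg hG⟩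
end

section
/- Let (G,≾) be a compatible quasi-ordered abelian group in which ≾ is antisymmetric (i.e. ≾ is a total order). If G is not isomorphic to ℤ/2ℤ, then (G,≾) is an ordered abelian group, i.e. for all x, y, z ∈ G, x ≾ y implies x + z ≾ y + z. -/
universe u

variable {G : Type u} [AddCommGroup G]

/-- if `≾` is a compatible quasi-order which is antisymmetric
(i.e. a total order) and `G` is not isomorphic to `ℤ/2ℤ`, then `(G, ≾)` is an
ordered abelian group: `x ≾ y → x + z ≾ y + z`. -/
theorem compatible_order_is_ordered_group (r : G → G → Prop) (hc : Compatible r)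
    (hanti : ∀ x y, r x y → r y x → x = y)
    (hG : ¬ Nonempty (G ≃+ ZMod 2)) :
    ∀ x y z : G, r x y → r (x + z) (y + z) := by
  classical
  obtain ⟨⟨hrefl, htrans, htot⟩, hq1, hq2⟩ := hc
  have tr : ∀ a b c a' b' : G, r a b → b ≠ c → a + c = a' → b + c = b' → r a' b' := by
    intro a b c a' b' hab hbc ha hb
    have := hq2 a b c hab (fun ⟨h1, h2⟩ => hbc (hanti _ _ h1 h2))
    rwa [ha, hb] at this
  intro x y z hxy
  by_cases hyz : y = z
  swap
  · exact tr x y z _ _ hxy hyz rfl rfl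
  subst hyz
  by_cases hxy' : x = y
  · subst hxy'; exact hrefl _
  by_contra hcon
  have h2y : r (y + y) (x + y) := (htot _ _).resolve_left hcon
  have hne2 : y + y ≠ x + y := fun h => hxy' (add_right_cancel h).symm
  by_cases hs0 : x + y = 0
  · -- case x + y = 0
    have hx : x = -y := eq_neg_of_add_eq_zero_left hs0
    have hyy : y + y ≠ 0 := fun h => hne2 (h.trans hs0.symm)
    have h1 : r (-(y + y)) 0 := tr x y (-y) _ _ hxy
      (fun h => hyy (by nth_rewrite 2 [h]; exact add_neg_cancel y))
      (by rw [hx]; abel) (add_neg_cancel y)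
    have h2 : r 0 (-(y + y)) := tr (y + y) (x + y) (-(y + y)) _ _ h2y
      (fun h => hyy (neg_eq_zero.mp (by rw [← h]; exact hs0)))
      (add_neg_cancel _) (by rw [hs0, zero_add])
    exact hyy (neg_eq_zero.mp (hanti _ _ h1 h2))
  by_cases hss : (x + y) + (x + y) = 0
  · -- case s ≠ 0, 2s = 0 : the ZMod 2 situation
    have hd0 : r 0 (y - x) := tr x y (-x) _ _ hxy
      (fun h => hs0 (by rw [h]; exact add_neg_cancel x))
      (add_neg_cancel x) (by abel)
    have hdne : y - x ≠ 0 := fun h => hxy' (sub_eq_zero.mp h).symm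
    have h0md : r 0 (x - y) := tr (y + y) (x + y) (-(y + y)) _ _ h2y
      (fun h => hxy' (sub_eq_zero.mp (by
        have h1 : (x + y) + (y + y) = 0 := by rw [h]; exact neg_add_cancel _
        have h2 : x - y = ((x + y) + (x + y)) - ((x + y) + (y + y)) := by abel
        rw [h2, hss, h1, sub_zero])))
      (add_neg_cancel _) (by abel)
    have h2d : (y - x) + (y - x) = 0 := by
      by_contra h2d
      have hmd : r (x - y) 0 := tr 0 (y - x) (x - y) _ _ hd0
        (fun h => h2d (by nth_rewrite 2 [h]; abel))
        (zero_add _) (by abel)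
      exact hxy' (sub_eq_zero.mp (hanti _ _ hmd h0md))
    have hds : y - x = x + y := by
      by_contra hds
      have h3 : r (x + y) (y + y) := tr 0 (y - x) (x + y) _ _ hd0 hds
        (zero_add _) (by abel)
      exact hxy' (add_right_cancel (hanti _ _ h3 h2y))
    have hy2 : y + y = 0 := by
      have h5 : y + y = (y - x) + (x + y) := by abel
      rw [h5, hds]; exact hss
    by_cases hyd : y = y - x
    · -- x = 0, so 0 ≺ y, 2y = 0, and every element is 0 or y : G ≅ ℤ/2
      have hx0 : x = 0 := by
        have h5 : x = y - (y - x) := by abel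
        rw [h5, ← hyd]; exact sub_self y
      have hy0 : y ≠ 0 := fun h => hxy' (hx0.trans h.symm)
      have hr0y : r 0 y := by rw [hx0] at hxy; exact hxy
      have hall : ∀ g : G, g = 0 ∨ g = y := by
        intro g
        by_contra hg
        push_neg at hg
        obtain ⟨hg0, hgy⟩ := hg
        have ha : r g (y + g) := tr 0 y g _ _ hr0y (fun h => hgy h.symm) (zero_add g) rfl
        have hb : r (y + g) g := tr 0 y (y + g) _ _ hr0y
          (fun h => hg0 (by
            have h5 : g = (y + g) - y := by abel
            rw [h5, ← h]; exact sub_self y))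
          (zero_add _) (by rw [← add_assoc, hy2, zero_add])
        have heq := hanti _ _ ha hb
        exact hy0 (by
          have h5 : y = (y + g) - g := by abel
          rw [h5, ← heq]; exact sub_self g)
      refine hG ⟨{ toFun := fun g => if g = 0 then 0 else 1
                   invFun := fun n => if n = 0 then 0 else y
                   left_inv := ?_
                   right_inv := ?_
                   map_add' := ?_ }⟩
      · intro g
        rcases hall g with rfl | rfl
        · simp
        · simp only [if_neg hy0, if_neg (by decide : (1 : ZMod 2) ≠ 0)]
      · intro n
        have hn : n = 0 ∨ n = 1 := by revert n; decide
        rcases hn with rfl | rfl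
        · simp
        · simp only [if_neg (by decide : (1 : ZMod 2) ≠ 0), if_neg hy0]
      · intro a b
        rcases hall a with rfl | rfl <;> rcases hall b with rfl | rfl <;>
          simp [hy0, hy2] <;> decide
    · -- y ≠ y - x : translate x ≺ y by (y - x)
      have h6 : r y x := tr x y (y - x) _ _ hxy hyd (by abel)
        (by
          have h7 : y + (y - x) = ((y - x) + (y - x)) + x := by abel
          rw [h7, h2d, zero_add])
      exact hxy' (hanti _ _ hxy h6)
  · -- case s ≠ 0, 2s ≠ 0
    have hA : r (y - x) 0 := tr (y + y) (x + y) (-(x + y)) _ _ h2y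
      (fun h => hss (by nth_rewrite 2 [h]; exact add_neg_cancel _))
      (by abel) (add_neg_cancel _)
    have hB : r 0 (y - x) := tr x y (-x) _ _ hxy
      (fun h => hs0 (by rw [h]; exact add_neg_cancel x))
      (add_neg_cancel x) (by abel)
    exact hxy' (sub_eq_zero.mp (hanti _ _ hA hB)).symm
end

section
/- A compatible quasi-ordered abelian group (G,≾) is an ordered abelian group (i.e. ≾ is antisymmetric and x ≾ y implies x + z ≾ y + z for all x, y, z) if and only if every element of G is o-type. -/
universe u

variable {G : Type u} [AddCommGroup G]

/-- a compatible q.o.a.g `(G, ≾)` is an ordered abelian group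
(`≾` is antisymmetric and translation invariant) iff every element of `G` is
o-type. -/
theorem ordered_iff_all_otype (r : G → G → Prop) (hc : Compatible r) :
    ((∀ x y, r x y → r y x → x = y) ∧
      (∀ x y z : G, r x y → r (x + z) (y + z))) ↔
    (∀ g : G, OType r g) := by
  obtain ⟨⟨hrefl, htrans, htot⟩, hq1, hq2⟩ := hc
  constructor
  · rintro ⟨has, htr⟩ g
    refine ⟨fun h h1 h2 => has h g h1 h2, fun hgg => ?_⟩
    rcases htot g 0 with h | h
    · have h2 : r (g + g) (0 + g) := htr g 0 g h
      rw [hgg, zero_add] at h2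
      exact has g 0 h h2
    · have h2 : r (0 + g) (g + g) := htr 0 g g h
      rw [hgg, zero_add] at h2
      exact has g 0 h2 h
  · intro ho
    have eqof : ∀ a b : G, r a b → r b a → a = b := fun a b h1 h2 => (ho b).1 a h1 h2
    have q2' : ∀ x y z : G, r x y → y ≠ z → r (x + z) (y + z) := by
      intro x y z h hne
      exact hq2 x y z h (fun hs => hne (eqof y z hs.1 hs.2))
    have sq : ∀ z : G, z + z = 0 → z = 0 := fun z => (ho z).2
    refine ⟨eqof, ?_⟩
    intro x y z hxy
    by_cases hyz : y = z
    · subst hyz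
      by_cases hxz : x = y
      · subst hxz; exact hrefl _
      by_cases hy0 : y = 0
      · subst hy0; simpa using hxy
      rcases htot (x + y) (y + y) with h | h
      · exact h
      · by_cases hxw : x + y = -y
        · -- x = -2y
          have hne1 : y ≠ y + y := fun he => hy0 (by
            have : y + y = 0 + y := by rw [zero_add]; exact he.symm
            have h0 : y = 0 := add_right_cancel this.symm ▸ rfl
            exact h0)
          have h1 : r (x + (y + y)) (y + (y + y)) := q2' x y (y + y) hxy hne1
          have hx : x + (y + y) = 0 := by
            have : x = -y - y := eq_sub_of_add_eq hxw
            rw [this]; abel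
          rw [hx] at h1
          -- h1 : r 0 (y + (y+y))
          have hne2 : y + (y + y) ≠ -y := by
            intro he
            have h4 : (y + y) + (y + y) = 0 := by
              rw [show (y + y) + (y + y) = (y + (y + y)) + y by abel, he]; simp
            exact hy0 (sq y (sq (y + y) h4))
          have h2 : r (0 + -y) (y + (y + y) + -y) := q2' 0 (y + (y + y)) (-y) h1 hne2
          have e1 : (0 : G) + -y = x + y := by rw [zero_add, hxw]
          have e2 : y + (y + y) + -y = y + y := by abel
          rw [e1, e2] at h2
          exact h2
        · have h2 : r (y + y + -y) (x + y + -y) := q2' (y + y) (x + y) (-y) h hxw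
          have e1 : y + y + -y = y := by abel
          have e2 : x + y + -y = x := by abel
          rw [e1, e2] at h2
          exact absurd (eqof x y hxy h2) hxz
    · exact q2' x y z hxy hyz
end

section
/- Let (G,≾) be a compatible quasi-ordered abelian group. If h ∈ G is v-type and g ∈ G satisfies ¬(g ∼ h), then g − h ∼ g + h. -/
universe u

variable {G : Type u} [AddCommGroup G]

/-- in a compatible q.o.a.g, if `h` is v-type and `¬(g ∼ h)`,
then `g - h ∼ g + h`. -/
theorem vtype_sub_sim_add (r : G → G → Prop) (hc : Compatible r)
    (g h : G) (hh : VType r h) (hgh : ¬(r g h ∧ r h g)) :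
    r (g - h) (g + h) ∧ r (g + h) (g - h) := by
  obtain ⟨⟨hrefl, htrans, _⟩, hq1, hq2⟩ := hc
  have lemA : ∀ x y z : G, r x y → r y x → ¬(r y z ∧ r z y) →
      r (x + z) (y + z) ∧ r (y + z) (x + z) := by
    intro x y z hxy hyx hnyz
    refine ⟨hq2 x y z hxy hnyz, hq2 y x z hyx ?_⟩
    rintro ⟨hxz, hzx⟩
    exact hnyz ⟨htrans _ _ _ hyx hxz, htrans _ _ _ hzx hxy⟩
  cases hh with
  | inr h2 =>
    have hne : -h = h := neg_eq_of_add_eq_zero_left h2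
    rw [sub_eq_add_neg, hne]
    exact ⟨hrefl _, hrefl _⟩
  | inl hex =>
    obtain ⟨k, hkne, hkh, hhk⟩ := hex
    have hneg : r h (-h) ∧ r (-h) h := by
      by_contra hn
      have h1 := lemA k h (-h) hkh hhk hn
      rw [add_neg_cancel] at h1
      have : k + -h = 0 := hq1 _ h1.1 h1.2
      exact hkne (by have := eq_of_sub_eq_zero (sub_eq_add_neg k h ▸ this); exact this)
    have hngh : ¬(r h g ∧ r g h) := fun ⟨a, b⟩ => hgh ⟨b, a⟩
    have := lemA (-h) h g hneg.2 hneg.1 hngh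
    rw [add_comm (-h) g, add_comm h g, ← sub_eq_add_neg] at this
    exact this
end

section
/- Let (G,≾) be a compatible quasi-ordered abelian group and let H be an initial segment of G containing the set G^o of all o-type elements. Then H is a subgroup of G (0 ∈ H, H is closed under negation and under addition). -/
universe u

variable {G : Type u} [AddCommGroup G]

/-- Auxiliary: if `c` is not `∼`-equivalent to `-c`, then `c` is o-type. -/
lemma otype_of_not_sim_neg (r : G → G → Prop) (hc : Compatible r) (c : G)
    (hnc : ¬(r c (-c) ∧ r (-c) c)) : OType r c := by
  obtain ⟨⟨hrefl, htrans, htotal⟩, hq1, hq2⟩ := hc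
  constructor
  · intro k hkc hck
    have hknc : ¬(r k (-c) ∧ r (-c) k) := by
      rintro ⟨h1, h2⟩
      exact hnc ⟨htrans _ _ _ hck h1, htrans _ _ _ h2 hkc⟩
    have h1 : r (k + -c) (c + -c) := hq2 k c (-c) hkc hnc
    have h2 : r (c + -c) (k + -c) := hq2 c k (-c) hck hknc
    have h3 : k + -c = 0 := hq1 (k + -c) (by simpa using h1) (by simpa using h2)
    have : k - c = 0 := by simpa [sub_eq_add_neg] using h3
    exact sub_eq_zero.mp this
  · intro h2c
    have hcc : c = -c := eq_neg_of_add_eq_zero_left h2c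
    exact absurd ⟨by rw [← hcc]; exact hrefl c, by rw [← hcc]; exact hrefl c⟩ hnc

/-- in a compatible q.o.a.g, any initial segment `H` containing
all o-type elements is a subgroup of `G`. -/
theorem initial_segment_containing_otype_is_subgroup (r : G → G → Prop)
    (hc : Compatible r) (H : Set G)
    (hinit : ∀ s ∈ H, ∀ a : G, r a s → a ∈ H)
    (hOsub : ∀ g : G, OType r g → g ∈ H) :
    (0 : G) ∈ H ∧ (∀ g ∈ H, -g ∈ H) ∧ (∀ g ∈ H, ∀ h ∈ H, g + h ∈ H) := by
  obtain ⟨⟨hrefl, htrans, htotal⟩, hq1, hq2⟩ := hc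
  have hc' : Compatible r := ⟨⟨hrefl, htrans, htotal⟩, hq1, hq2⟩
  -- if `g < -g` strictly then `-g` is o-type
  have hnegO : ∀ g : G, ¬ r (-g) g → OType r (-g) := by
    intro g hng
    apply otype_of_not_sim_neg r hc'
    rw [neg_neg]
    rintro ⟨h1, _⟩
    exact hng h1
  have h0 : (0 : G) ∈ H := by
    apply hOsub
    exact ⟨fun h h1 h2 => hq1 h h1 h2, fun _ => rfl⟩
  refine ⟨h0, ?_, ?_⟩
  · -- negation
    intro g hg
    by_cases hng : r (-g) g
    · exact hinit g hg (-g) hng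
    · exact hOsub (-g) (hnegO g hng)
  · -- addition
    intro g hg h hh
    set c := g + h with hcdef
    by_cases hcg : r c g
    · exact hinit g hg c hcg
    by_cases hch : r c h
    · exact hinit h hh c hch
    -- now g < c and h < c strictly
    by_cases hcnh : r c (-h)
    · -- then -h is o-type (since ¬ r (-h) h, else r c h), and c ≾ -h ∈ H
      have hnhh : ¬ r (-h) h := fun hx => hch (htrans _ _ _ hcnh hx)
      exact hinit (-h) (hOsub (-h) (hnegO h hnhh)) c hcnh
    by_cases hcng : r c (-g)
    · have hngg : ¬ r (-g) g := fun hx => hcg (htrans _ _ _ hcng hx)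
      exact hinit (-g) (hOsub (-g) (hnegO g hngg)) c hcng
    -- now ¬ r c (-g) and ¬ r c (-h)
    by_cases hcc : r c (-c)
    · -- contradiction: r (-g) c, ¬(c ∼ -h), Q2 gives r (-c) g, so r c g
      exfalso
      have hgc : r (-g) c := (htotal (-g) c).resolve_right fun hx => hcng hx
      have hnsim : ¬(r c (-h) ∧ r (-h) c) := fun ⟨hx, _⟩ => hcnh hx
      have hQ : r (-g + -h) (c + -h) := hq2 (-g) c (-h) hgc hnsim
      have e1 : -g + -h = -c := by rw [hcdef]; abel
      have e2 : c + -h = g := by rw [hcdef]; abel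
      rw [e1, e2] at hQ
      exact hcg (htrans _ _ _ hcc hQ)
    · -- c is o-type
      exact hOsub c (otype_of_not_sim_neg r hc' c (fun ⟨hx, _⟩ => hcc hx))
end

section
/- Let (G,≾) be a compatible quasi-ordered abelian group. Then the set G^o of o-type elements is an initial segment of G and a subgroup of G, and (G^o, ≾ restricted to G^o) is an ordered abelian group. In particular, every o-type element g and v-type element h ≠ 0 satisfy g ≺ h. -/
universe u

variable {G : Type u} [AddCommGroup G]

section Aux

variable {r : G → G → Prop}

/-- A v-type element is equivalent to its negative. -/
private lemma lemV (hc : Compatible r) {h : G} (hv : VType r h) :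
    r h (-h) ∧ r (-h) h := by
  obtain ⟨⟨hrefl, htrans, htot⟩, hq1, hq2⟩ := hc
  rcases hv with ⟨k, hkne, hkh, hhk⟩ | h2
  · by_contra hns
    have h1 : r (k + -h) (h + -h) := hq2 k h (-h) hkh hns
    have h2 : ¬ (r k (-h) ∧ r (-h) k) := by
      rintro ⟨h3, h4⟩
      exact hns ⟨htrans _ _ _ hhk h3, htrans _ _ _ h4 hkh⟩
    have h5 : r (h + -h) (k + -h) := hq2 h k (-h) hhk h2
    rw [add_neg_cancel] at h1 h5
    have h6 : k + -h = 0 := hq1 _ h1 h5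
    exact hkne (by rwa [add_neg_eq_zero] at h6)
  · have : -h = h := neg_eq_of_add_eq_zero_right h2
    rw [this]
    exact ⟨hrefl h, hrefl h⟩

/-- A nonzero element equivalent to its negative is strictly positive. -/
private lemma lemV2 (hc : Compatible r) {h : G} (hs : r h (-h) ∧ r (-h) h)
    (hnz : h ≠ 0) : r 0 h ∧ ¬ r h 0 := by
  obtain ⟨⟨hrefl, htrans, htot⟩, hq1, hq2⟩ := hc
  have h0h : r 0 h := by
    by_contra hn
    have hh0 : r h 0 := (htot h 0).resolve_right hn
    have hmh0 : r (-h) 0 := htrans _ _ _ hs.2 hh0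
    have h1 : r (-h + h) (0 + h) := hq2 (-h) 0 h hmh0 (fun c => hn c.1)
    rw [neg_add_cancel, zero_add] at h1
    exact hn h1
  exact ⟨h0h, fun hh0 => hnz (hq1 _ hh0 h0h)⟩

/-- Core lemma: a nonzero element equivalent to its negative is not below any
o-type element. -/
private lemma lemC (hc : Compatible r) {s a : G} (hs : OType r s)
    (ha : r a (-a) ∧ r (-a) a) (hanz : a ≠ 0) : ¬ r a s := by
  have hrefl := hc.1.1
  have htrans := hc.1.2.1
  have htot := hc.1.2.2
  have hq1 := hc.2.1
  have hq2 := hc.2.2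
  intro hras
  obtain ⟨h0a, hna0⟩ := lemV2 hc ha hanz
  have h0ma : r 0 (-a) := htrans _ _ _ h0a ha.1
  have hsnz : s ≠ 0 := by rintro rfl; exact hna0 hras
  have hsns : ¬ (r s (-s) ∧ r (-s) s) := by
    rintro ⟨c1, c2⟩
    have h1 : -s = s := hs.1 (-s) c2 c1
    exact hsnz (hs.2 (neg_eq_iff_add_eq_zero.mp h1))
  have hnsa : ¬ r s a := by
    intro hrsa
    have heq : a = s := hs.1 a hras hrsa
    have heq2 : -a = s := hs.1 (-a) (htrans _ _ _ ha.2 hras) (htrans _ _ _ hrsa ha.1)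
    have h1 : -a = a := heq2.trans heq.symm
    have h2 : a + a = 0 := neg_eq_iff_add_eq_zero.mp h1
    have hss : s + s = 0 := by rw [← heq]; exact h2
    exact hsnz (hs.2 hss)
  have hnsma : ¬ r s (-a) := fun c => hnsa (htrans _ _ _ c ha.2)
  have h1 : r (a + -a) (s + -a) := hq2 a s (-a) hras (fun c => hnsma c.1)
  rw [add_neg_cancel] at h1
  have h2 : ¬ r (s + -a) 0 := by
    intro c
    have e : s + -a = 0 := hq1 _ c h1
    have e2 : s = a := by rwa [add_neg_eq_zero] at e
    exact hnsa (e2 ▸ hrefl s)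
  have h3 : r (a + -s) (s + -s) := hq2 a s (-s) hras hsns
  rw [add_neg_cancel] at h3
  have h4 : r (0 + s) (-a + s) := hq2 0 (-a) s h0ma (fun c => hnsma c.2)
  rw [zero_add] at h4
  have h4' : r s (s + -a) := by rwa [add_comm] at h4
  have h5 : ¬ (r (s + -a) (a + -s) ∧ r (a + -s) (s + -a)) := by
    rintro ⟨c1, _⟩
    exact h2 (htrans _ _ _ c1 h3)
  have h6 : r (s + (a + -s)) ((s + -a) + (a + -s)) := hq2 s (s + -a) (a + -s) h4' h5
  have e1 : s + (a + -s) = a := by abel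
  have e2 : (s + -a) + (a + -s) = 0 := by abel
  rw [e1, e2] at h6
  exact hna0 h6

private lemma otype0 (hc : Compatible r) : OType r (0 : G) :=
  ⟨fun h h1 h2 => hc.2.1 h h1 h2, fun _ => rfl⟩

/-- A non-o-type element is equivalent to its negative. -/
private lemma lemNotO (hc : Compatible r) {a : G} (hna : ¬ OType r a) :
    r a (-a) ∧ r (-a) a := by
  apply lemV hc
  by_cases h2 : a + a = 0
  · exact Or.inr h2
  · left
    have hA : ¬ ∀ h, r h a → r a h → h = a := fun hA => hna ⟨hA, fun c => absurd c h2⟩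
    push_neg at hA
    obtain ⟨h, hh1, hh2, hh3⟩ := hA
    exact ⟨h, hh3, hh1, hh2⟩

/-- An o-type element with both it and its negative nonnegative is zero. -/
private lemma lemZero (hc : Compatible r) {g : G} (hg : OType r g)
    (h1 : r 0 g) (h2 : r 0 (-g)) : g = 0 := by
  have hq1 := hc.2.1
  have hq2 := hc.2.2
  by_contra hnz
  have hnsim : ¬ (r g (-g) ∧ r (-g) g) := by
    rintro ⟨c1, c2⟩
    have e : -g = g := hg.1 (-g) c2 c1
    exact hnz (hg.2 (neg_eq_iff_add_eq_zero.mp e))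
  have h3 : r (0 + g) (-g + g) := hq2 0 (-g) g h2 (fun c => hnsim ⟨c.2, c.1⟩)
  rw [zero_add, neg_add_cancel] at h3
  exact hnz (hq1 g h3 h1)

private lemma otype_neg (hc : Compatible r) {g : G} (hg : OType r g) :
    OType r (-g) := by
  by_contra hn
  have hsim := lemNotO hc hn
  rw [neg_neg] at hsim
  have e : -g = g := hg.1 (-g) hsim.1 hsim.2
  have hgz : g = 0 := hg.2 (neg_eq_iff_add_eq_zero.mp e)
  apply hn
  rw [hgz, neg_zero]
  exact otype0 hc

private lemma otype_init (hc : Compatible r) {s a : G} (hs : OType r s)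
    (has : r a s) : OType r a := by
  by_contra hn
  have hanz : a ≠ 0 := by rintro rfl; exact hn (otype0 hc)
  exact lemC hc hs (lemNotO hc hn) hanz has

private lemma otype_add (hc : Compatible r) {g h : G} (hg : OType r g)
    (hh : OType r h) : OType r (g + h) := by
  have hrefl := hc.1.1
  have htrans := hc.1.2.1
  have htot := hc.1.2.2
  have hq1 := hc.2.1
  have hq2 := hc.2.2
  by_contra hn
  have hknz : g + h ≠ 0 := by
    intro c; exact hn (by rw [c]; exact otype0 hc)
  have hk := lemNotO hc hn
  have key : ∀ s, OType r s →
      ¬ r (g+h) s ∧ r s (g+h) ∧ ¬ r (-(g+h)) s ∧ r s (-(g+h)) := by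
    intro s hso
    have h1 : ¬ r (g+h) s := lemC hc hso hk hknz
    have h2 : r s (g+h) := (htot (g+h) s).resolve_left h1
    have h3 : ¬ r (-(g+h)) s := fun c => h1 (htrans _ _ _ hk.1 c)
    have h4 : r s (-(g+h)) := htrans _ _ _ h2 hk.1
    exact ⟨h1, h2, h3, h4⟩
  obtain ⟨hg1, hg2, hg3, hg4⟩ := key g hg
  obtain ⟨hh1, hh2, hh3, hh4⟩ := key h hh
  obtain ⟨hmg1, hmg2, hmg3, hmg4⟩ := key (-g) (otype_neg hc hg)
  obtain ⟨hmh1, hmh2, hmh3, hmh4⟩ := key (-h) (otype_neg hc hh)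
  have e1 : r (h + -h) ((g+h) + -h) := hq2 h (g+h) (-h) hh2 (fun c => hmh1 c.1)
  rw [add_neg_cancel, add_neg_cancel_right] at e1
  have e2 : r (-h + h) (-(g+h) + h) := hq2 (-h) (-(g+h)) h hmh4 (fun c => hh3 c.1)
  have e2' : -(g+h) + h = -g := by abel
  rw [neg_add_cancel, e2'] at e2
  have e3 : r (g + -g) ((g+h) + -g) := hq2 g (g+h) (-g) hg2 (fun c => hmg1 c.1)
  have e3' : (g+h) + -g = h := by abel
  rw [add_neg_cancel, e3'] at e3
  have e4 : r (-g + g) (-(g+h) + g) := hq2 (-g) (-(g+h)) g hmg4 (fun c => hg3 c.1)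
  have e4' : -(g+h) + g = -h := by abel
  rw [neg_add_cancel, e4'] at e4
  have hgz : g = 0 := lemZero hc hg e1 e2
  have hhz : h = 0 := lemZero hc hh e3 e4
  exact hknz (by rw [hgz, hhz, add_zero])

private lemma otype_trans_add (hc : Compatible r) {x y z : G}
    (hx : OType r x) (hy : OType r y) (hxy : r x y) :
    r (x + z) (y + z) := by
  have hrefl := hc.1.1
  have htrans := hc.1.2.1
  have htot := hc.1.2.2
  have hq1 := hc.2.1
  have hq2 := hc.2.2
  by_cases hsim : r y z ∧ r z y
  · have hzy : z = y := hy.1 z hsim.2 hsim.1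
    subst hzy
    by_contra hn
    have hxy0 : x + z ≠ 0 := by
      intro c
      have hxmy : x = -z := by rwa [add_eq_zero_iff_eq_neg] at c
      rw [c] at hn
      have hynz : z ≠ 0 := by
        rintro rfl
        simp only [add_zero] at hn
        exact hn (hrefl 0)
      have hyy0 : r (z+z) 0 := (htot (z+z) 0).resolve_right hn
      have hnsim0 : ¬ (r 0 (-z) ∧ r (-z) 0) := by
        rintro ⟨c1, c2⟩
        have e : -z = 0 := hq1 _ c2 c1
        exact hynz (by rwa [neg_eq_zero] at e)
      have h3 : r ((z+z) + -z) (0 + -z) := hq2 (z+z) 0 (-z) hyy0 hnsim0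
      rw [add_neg_cancel_right, zero_add] at h3
      rw [hxmy] at hxy
      have e : -z = z := hy.1 (-z) hxy h3
      exact hynz (hy.2 (neg_eq_iff_add_eq_zero.mp e))
    have hxyO : OType r (x + z) := otype_add hc hx hy
    have hnsim2 : ¬ (r (x+z) (-(x+z)) ∧ r (-(x+z)) (x+z)) := by
      rintro ⟨c1, c2⟩
      exact hxy0 (hxyO.2 (neg_eq_iff_add_eq_zero.mp (hxyO.1 _ c2 c1)))
    have htt : r (z+z) (x+z) := (htot (x+z) (z+z)).resolve_left hn
    have h5 : r ((z+z) + -(x+z)) ((x+z) + -(x+z)) := hq2 _ _ _ htt hnsim2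
    have e5 : (z+z) + -(x+z) = z + -x := by abel
    rw [e5, add_neg_cancel] at h5
    have hnsim3 : ¬ (r z (-x) ∧ r (-x) z) := by
      rintro ⟨c1, c2⟩
      have e : -x = z := hy.1 (-x) c2 c1
      exact hxy0 (by rw [← e, add_neg_cancel])
    have h6 : r (x + -x) (z + -x) := hq2 x z (-x) hxy hnsim3
    rw [add_neg_cancel] at h6
    have e : z + -x = 0 := hq1 _ h5 h6
    have hyx : z = x := by rwa [add_neg_eq_zero] at e
    rw [hyx] at hn
    exact hn (hrefl _)
  · exact hq2 x y z hxy hsim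

end Aux

/-- in a compatible q.o.a.g, the set `G^o` of o-type elements is
an initial segment and a subgroup of `G`, and `≾` restricted to `G^o` is a
group order; moreover every o-type `g` and v-type `h ≠ 0` satisfy `g ≺ h`. -/
theorem otype_part_is_ordered_initial_subgroup (r : G → G → Prop)
    (hc : Compatible r) :
    (∀ s, OType r s → ∀ a : G, r a s → OType r a) ∧
    (OType r (0 : G)) ∧
    (∀ g, OType r g → OType r (-g)) ∧
    (∀ g h, OType r g → OType r h → OType r (g + h)) ∧
    (∀ x y, OType r x → OType r y → r x y → r y x → x = y) ∧
    (∀ x y z, OType r x → OType r y → OType r z → r x y → r (x + z) (y + z)) ∧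
    (∀ g h, OType r g → VType r h → h ≠ 0 → (r g h ∧ ¬ r h g)) := by
  refine ⟨fun s hs a has => otype_init hc hs has,
    otype0 hc,
    fun g hg => otype_neg hc hg,
    fun g h hg hh => otype_add hc hg hh,
    fun x y hx hy h1 h2 => (hx.1 y h2 h1).symm,
    fun x y z hx hy hz hxy => otype_trans_add hc hx hy hxy,
    fun g h hg hv hnz => ?_⟩
  have hsim := lemV hc hv
  have h1 : ¬ r h g := lemC hc hg hsim hnz
  exact ⟨(hc.1.2.2 g h).resolve_right h1, h1⟩
end

section
/- Let (G,≾) be a compatible quasi-ordered abelian group and let G^v = G \ G^o denote the set of elements that are not o-type. Then G^v is a final segment of G (if g ∈ G^v and g ≾ a then a ∈ G^v). Moreover, for every g ∈ G^v and every h ∈ G: if h ≾ g then g + h ≾ g (so in general g + h ≾ g or g + h ≾ h), and if h ≺ g then g + h ∼ g. -/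
universe u

variable {G : Type u} [AddCommGroup G]

section Aux

variable {r : G → G → Prop}

/-- v-type elements satisfy `g ∼ -g`. -/
lemma qB (hc : Compatible r) {g : G} (hg : ¬ OType r g) :
    r g (-g) ∧ r (-g) g := by
  obtain ⟨⟨hrefl, htrans, htot⟩, hq1, hq2⟩ := hc
  by_contra hne
  unfold OType at hg
  rcases not_and_or.mp hg with hA | hB
  · push_neg at hA
    obtain ⟨h0, h1, h2, h3⟩ := hA
    have e1 : r (h0 + -g) (g + -g) := hq2 _ _ _ h1 hne
    have hcond : ¬ (r h0 (-g) ∧ r (-g) h0) := by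
      rintro ⟨c1, c2⟩
      exact hne ⟨htrans _ _ _ h2 c1, htrans _ _ _ c2 h1⟩
    have e2 : r (g + -g) (h0 + -g) := hq2 _ _ _ h2 hcond
    rw [add_neg_cancel] at e1 e2
    have h4 : h0 + -g = 0 := hq1 _ e1 e2
    apply h3
    have : h0 - g = 0 := by rw [sub_eq_add_neg]; exact h4
    exact sub_eq_zero.mp this
  · push_neg at hB
    obtain ⟨h2g, hg0⟩ := hB
    have hng : -g = g := neg_eq_of_add_eq_zero_left h2g
    rw [hng] at hne
    exact hne ⟨hrefl g, hrefl g⟩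

/-- v-type elements are strictly positive: `0 ≺ g`. -/
lemma qPos (hc : Compatible r) {g : G} (hg : ¬ OType r g) :
    r 0 g ∧ ¬ r g 0 := by
  obtain ⟨⟨hrefl, htrans, htot⟩, hq1, hq2⟩ := hc
  have hgne : g ≠ 0 := by
    rintro rfl
    exact hg ⟨fun h h1 h2 => hq1 h h1 h2, fun _ => rfl⟩
  have hB := qB ⟨⟨hrefl, htrans, htot⟩, hq1, hq2⟩ hg
  have hng0 : ¬ r g 0 := by
    intro hg0
    have hn0g : ¬ r 0 g := fun h0g => hgne (hq1 g hg0 h0g)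
    have hmg0 : r (-g) 0 := htrans _ _ _ hB.2 hg0
    have := hq2 (-g) 0 g hmg0 (fun hp => hn0g hp.1)
    rw [neg_add_cancel, zero_add] at this
    exact hn0g this
  exact ⟨(htot 0 g).resolve_right hng0, hng0⟩

/-- the v-part is a final segment. -/
lemma qFinal (hc : Compatible r) {g a : G} (hg : ¬ OType r g) (hga : r g a) :
    ¬ OType r a := by
  intro hOa
  obtain ⟨⟨hrefl, htrans, htot⟩, hq1, hq2⟩ := hc
  have hc' : Compatible r := ⟨⟨hrefl, htrans, htot⟩, hq1, hq2⟩
  obtain ⟨Aa, Ba⟩ := hOa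
  by_cases hag : r a g
  · have heq : g = a := Aa g hga hag
    subst heq
    exact hg ⟨Aa, Ba⟩
  · have hB := qB hc' hg
    have hP := qPos hc' hg
    have h0a : r 0 a := htrans _ _ _ hP.1 hga
    have hane : a ≠ 0 := by
      rintro rfl
      exact hag hP.1
    have hnaa : ¬ (r a (-a) ∧ r (-a) a) := by
      rintro ⟨c1, c2⟩
      have hma : -a = a := Aa _ c2 c1
      have h2a : a + a = 0 := neg_eq_iff_add_eq_zero.mp hma
      exact hane (Ba h2a)
    have h1 : ¬ r (a + g) a := by
      intro hle
      have := hq2 (a + g) a (-a) hle hnaa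
      rw [show a + g + -a = g by abel, add_neg_cancel] at this
      exact hP.2 this
    have hnmg0 : ¬ r (-g) 0 := fun h => hP.2 (htrans _ _ _ hB.1 h)
    have h2 : ¬ r (a + -g) a := by
      intro hle
      have := hq2 (a + -g) a (-a) hle hnaa
      rw [show a + -g + -a = -g by abel, add_neg_cancel] at this
      exact hnmg0 this
    have h3 : r a (a + -g) := (htot (a + -g) a).resolve_left h2
    have h4 : ¬ (r (a + -g) g ∧ r g (a + -g)) := by
      rintro ⟨c1, _⟩
      exact h2 (htrans _ _ _ c1 hga)
    have h5 := hq2 a (a + -g) g h3 h4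
    rw [show a + -g + g = a by abel] at h5
    exact h1 h5

/-- ultrametric inequality: `h ≾ g` implies `g + h ≾ g` for v-type `g`. -/
lemma qUltra (hc : Compatible r) {g h : G} (hg : ¬ OType r g) (hhg : r h g) :
    r (g + h) g := by
  obtain ⟨⟨hrefl, htrans, htot⟩, hq1, hq2⟩ := hc
  have hc' : Compatible r := ⟨⟨hrefl, htrans, htot⟩, hq1, hq2⟩
  by_contra hn
  have hgb : r g (g + h) := (htot (g + h) g).resolve_left hn
  have hb : ¬ OType r (g + h) := qFinal hc' hg hgb
  have hBb := qB hc' hb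
  have hgnb : r g (-(g + h)) := htrans _ _ _ hgb hBb.1
  have hcond : ¬ (r (-(g + h)) h ∧ r h (-(g + h))) := by
    rintro ⟨c1, _⟩
    exact hn (htrans _ _ _ (htrans _ _ _ hBb.1 c1) hhg)
  have key := hq2 g (-(g + h)) h hgnb hcond
  rw [show -(g + h) + h = -g by abel] at key
  exact hn (htrans _ _ _ key (qB hc' hg).2)

/-- strict case: `h ≺ g` implies `g ≾ g + h` for v-type `g`. -/
lemma qStrict (hc : Compatible r) {g h : G} (hg : ¬ OType r g) (hhg : r h g)
    (hngh : ¬ r g h) : r g (g + h) := by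
  obtain ⟨⟨hrefl, htrans, htot⟩, hq1, hq2⟩ := hc
  have hc' : Compatible r := ⟨⟨hrefl, htrans, htot⟩, hq1, hq2⟩
  have hB := qB hc' hg
  -- step 1: ¬ r g (-h)
  have step1 : ¬ r g (-h) := by
    intro hgh
    by_cases hhg' : r (-h) g
    · by_cases heq : -h = g
      · apply hngh
        have hh : h = -g := by rw [← neg_eq_iff_eq_neg]; exact heq
        rw [hh]; exact hB.1
      · have hvb : ¬ OType r (-h) := fun hO => heq (hO.1 g hgh hhg').symm
        have := (qB hc' hvb).1
        rw [neg_neg] at this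
        exact hngh (htrans _ _ _ hgh this)
    · have hvb := qFinal hc' hg hgh
      have := (qB hc' hvb).1
      rw [neg_neg] at this
      exact hngh (htrans _ _ _ hgh this)
  -- step 2
  by_contra hnn
  have hcond : ¬ (r g (-(g + h)) ∧ r (-(g + h)) g) := by
    rintro ⟨c1, c2⟩
    by_cases heq : -(g + h) = g
    · apply hnn
      have hgh : g + h = -g := by rw [← neg_eq_iff_eq_neg]; exact heq
      rw [hgh]; exact hB.1
    · have hvb : ¬ OType r (-(g + h)) := fun hO => heq (hO.1 g c1 c2).symm
      have h1 := (qB hc' hvb).1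
      rw [neg_neg] at h1
      exact hnn (htrans _ _ _ c1 h1)
  have key := hq2 h g (-(g + h)) hhg hcond
  rw [show h + -(g + h) = -g by abel, show g + -(g + h) = -h by abel] at key
  exact step1 (htrans _ _ _ hB.1 key)

end Aux

/-- in a compatible q.o.a.g, `G^v = G \ G^o` is a final segment;
for `g ∈ G^v` and `h ∈ G`, `h ≾ g` implies `g + h ≾ g` (so always
`g + h ≾ g ∨ g + h ≾ h`), and `h ≺ g` implies `g + h ∼ g`. -/
theorem vpart_final_segment_ultrametric (r : G → G → Prop) (hc : Compatible r) :
    (∀ g a : G, ¬ OType r g → r g a → ¬ OType r a) ∧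
    (∀ g h : G, ¬ OType r g → r h g → r (g + h) g) ∧
    (∀ g h : G, ¬ OType r g → (r (g + h) g ∨ r (g + h) h)) ∧
    (∀ g h : G, ¬ OType r g → r h g → ¬ r g h →
      (r (g + h) g ∧ r g (g + h))) := by
  refine ⟨fun g a hg hga => qFinal hc hg hga,
    fun g h hg hhg => qUltra hc hg hhg, ?_,
    fun g h hg hhg hngh => ⟨qUltra hc hg hhg, qStrict hc hg hhg hngh⟩⟩
  intro g h hg
  rcases hc.1.2.2 h g with hhg | hgh
  · exact Or.inl (qUltra hc hg hhg)
  · right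
    have hv := qFinal hc hg hgh
    have := qUltra hc hv hgh
    rwa [add_comm] at this
end

section
/- Let (G,≾) be a compatible quasi-ordered abelian group. Then ≾ is valuational (i.e. there exists a valuation v on G with g ≾ h ⇔ v(g) ≥ v(h) for all g, h) if and only if every element of G is v-type. -/
universe u

variable {G : Type u} [AddCommGroup G]

/-- A group valuation with values in `WithTop Γ` (`⊤` playing the role of `∞`). -/
def IsValuation {A : Type u} [AddCommGroup A] {Γ : Type u} [LinearOrder Γ]
    (v : A → WithTop Γ) : Prop :=
  (∀ g, v g = ⊤ ↔ g = 0) ∧ (∀ g, v (-g) = v g) ∧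
  (∀ g h, min (v g) (v h) ≤ v (g + h))

/-- A quasi-order is valuational if it is induced by some valuation:
`g ≾ h ↔ v g ≥ v h`. -/
def Valuational {A : Type u} [AddCommGroup A] (r : A → A → Prop) : Prop :=
  ∃ (Γ : Type u) (_ : LinearOrder Γ) (v : A → WithTop Γ),
    IsValuation v ∧ ∀ g h, r g h ↔ v h ≤ v g

/-!
If `x ≁ -x`, then by (Q2) translation by `-x` sends every `h ∼ x` to `h - x ∼ 0`, so `h = x`
by (Q1); hence the v-type elements are exactly those with `x ∼ -x`. Once every element satisfies
`x ∼ -x`, (Q1) and (Q2) make `0` the least element and give the ultrametric inequality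
`a ≾ b → a + b ≾ b`; the valuation then sends `g ≠ 0` to its class in the antisymmetrization of
`≾`, and `0` to `⊤`.
-/

namespace TotalQO

variable {r : G → G → Prop}

/-- A copy of `G` indexed by a proof of `TotalQO r`, so that the instances below can use it. -/
def Dual (_ : TotalQO r) : Type u := G

instance (hr : TotalQO r) : Preorder hr.Dual where
  le g h := r h g
  le_refl := hr.1
  le_trans _ _ _ hgh hhk := hr.2.1 _ _ _ hhk hgh

instance (hr : TotalQO r) : @Std.Total hr.Dual (· ≤ ·) := ⟨fun g h => hr.2.2 h g⟩

noncomputable instance (hr : TotalQO r) : DecidableLE hr.Dual := Classical.decRel _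

noncomputable instance (hr : TotalQO r) : DecidableLT hr.Dual := Classical.decRel _

open Classical in
noncomputable def valuation (hr : TotalQO r) (g : G) :
    WithTop (Antisymmetrization hr.Dual (· ≤ ·)) :=
  if g = 0 then ⊤ else toAntisymmetrization (· ≤ ·) (show hr.Dual from g)

theorem valuation_eq_top_iff (hr : TotalQO r) {g : G} : hr.valuation g = ⊤ ↔ g = 0 := by
  by_cases hg : g = 0 <;> simp [valuation, hg]

theorem valuation_le_valuation_iff (hr : TotalQO r) (hq1 : AxQ1 r) (hbot : ∀ x, r 0 x)
    {g h : G} : hr.valuation h ≤ hr.valuation g ↔ r g h := by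
  by_cases hg : g = 0
  · simp [valuation, hg, hbot]
  by_cases hh : h = 0
  · simpa [valuation, hg, hh] using fun hg0 => hg (hq1 g hg0 (hbot g))
  simp only [valuation, hg, hh, if_false, WithTop.coe_le_coe]
  exact toAntisymmetrization_le_toAntisymmetrization_iff

theorem valuational (hr : TotalQO r) (hq1 : AxQ1 r) (hbot : ∀ x, r 0 x)
    (hneg : ∀ x, AntisymmRel r x (-x)) (hultra : ∀ a b, r a b → r (a + b) b) :
    Valuational r := by
  have hle (g h : G) := hr.valuation_le_valuation_iff hq1 hbot (g := g) (h := h)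
  refine ⟨_, inferInstance, hr.valuation, ⟨fun g => hr.valuation_eq_top_iff, fun g => ?_,
    fun g h => ?_⟩, fun g h => (hle g h).symm⟩
  · exact le_antisymm ((hle _ _).2 (hneg g).1) ((hle _ _).2 (hneg g).2)
  · rcases hr.2.2 g h with hgh | hhg
    · exact min_le_of_right_le ((hle _ _).2 (hultra g h hgh))
    · exact min_le_of_left_le ((hle _ _).2 (add_comm h g ▸ hultra h g hhg))

end TotalQO

theorem Valuational.antisymmRel_neg {r : G → G → Prop} (hval : Valuational r) (g : G) :
    AntisymmRel r g (-g) := by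
  obtain ⟨_, _, _, ⟨-, hvneg, -⟩, hvr⟩ := hval
  exact ⟨(hvr _ _).2 (hvneg g).le, (hvr _ _).2 (hvneg g).ge⟩

theorem VType.of_antisymmRel_neg {r : G → G → Prop} {g : G} (hg : AntisymmRel r g (-g)) :
    VType r g := by
  by_cases hng : -g = g
  · exact Or.inr (by rw [← neg_add_cancel g, hng])
  · exact Or.inl ⟨-g, hng, hg.2, hg.1⟩

namespace Compatible

variable {r : G → G → Prop} {x y z : G}

protected theorem refl (hc : Compatible r) (x : G) : r x x := hc.1.1 x

protected theorem trans (hc : Compatible r) : r x y → r y z → r x z := hc.1.2.1 x y z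

protected theorem total (hc : Compatible r) (x y : G) : r x y ∨ r y x := hc.1.2.2 x y

theorem eq_zero_of_antisymmRel (hc : Compatible r) (hx : AntisymmRel r x 0) : x = 0 :=
  hc.2.1 x hx.1 hx.2

theorem add_le_add_right (hc : Compatible r) (hxy : r x y) (hyz : ¬AntisymmRel r y z) :
    r (x + z) (y + z) :=
  hc.2.2 x y z hxy hyz

theorem add_right_antisymmRel (hc : Compatible r) (hxy : AntisymmRel r x y)
    (hyz : ¬AntisymmRel r y z) : AntisymmRel r (x + z) (y + z) :=
  ⟨hc.add_le_add_right hxy.1 hyz, hc.add_le_add_right hxy.2 fun hxz =>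
    hyz ⟨hc.trans hxy.2 hxz.1, hc.trans hxz.2 hxy.1⟩⟩

theorem antisymmRel_neg_of_vtype (hc : Compatible r) (hx : VType r x) :
    AntisymmRel r x (-x) := by
  by_contra hnx
  rcases hx with ⟨h, hne, hhx, hxh⟩ | hxx
  · have hsub := hc.add_right_antisymmRel ⟨hhx, hxh⟩ hnx
    rw [add_neg_cancel] at hsub
    exact hne (add_neg_eq_zero.mp (hc.eq_zero_of_antisymmRel hsub))
  · rw [neg_eq_of_add_eq_zero_left hxx] at hnx
    exact hnx ⟨hc.refl x, hc.refl x⟩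

theorem vtype_iff_antisymmRel_neg (hc : Compatible r) :
    VType r x ↔ AntisymmRel r x (-x) :=
  ⟨hc.antisymmRel_neg_of_vtype, VType.of_antisymmRel_neg⟩

theorem zero_le (hc : Compatible r) (hx : r (-x) x) : r 0 x := by
  by_contra h0x
  have hx0 : r x 0 := (hc.total x 0).resolve_right h0x
  have hnx : ¬AntisymmRel r 0 (-x) := fun h =>
    h0x (neg_eq_zero.mp (hc.eq_zero_of_antisymmRel h.symm) ▸ hc.refl 0)
  have h0nx : r 0 (-x) := by simpa using hc.add_le_add_right hx0 hnx
  exact h0x (hc.trans h0nx hx)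

theorem antisymmRel_add_of_lt (hc : Compatible r) (hneg : ∀ x, AntisymmRel r x (-x))
    (hxy : r x y) (hyx : ¬r y x) : AntisymmRel r (x + y) y := by
  have hy : r y (x + y) := by
    simpa using hc.add_le_add_right (hc.zero_le (hneg x).2) fun h => hyx h.2
  refine ⟨?_, hy⟩
  by_contra hn
  have hny : ¬AntisymmRel r y (-(x + y)) := fun h => hn (hc.trans (hneg (x + y)).1 h.2)
  have hneg_le := hc.add_le_add_right hxy hny
  rw [show x + -(x + y) = -y by abel, show y + -(x + y) = -x by abel] at hneg_le
  exact hyx (hc.trans (hneg y).1 (hc.trans hneg_le (hneg x).2))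

theorem add_le_of_le (hc : Compatible r) (hneg : ∀ x, AntisymmRel r x (-x)) (hxy : r x y) :
    r (x + y) y := by
  by_cases hyx : r y x
  · by_contra hn
    have hy : r (-y) (x + y) := hc.trans (hneg y).2 ((hc.total (x + y) y).resolve_left hn)
    have hx := (hc.antisymmRel_add_of_lt hneg hy fun h => hn (hc.trans h (hneg y).2)).2
    rw [show -y + (x + y) = x by abel] at hx
    exact hn (hc.trans hx hxy)
  · exact (hc.antisymmRel_add_of_lt hneg hxy hyx).1

end Compatible

/-- a compatible quasi-order is valuational iff every element of
`G` is v-type. -/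
theorem valuational_iff_all_vtype (r : G → G → Prop) (hc : Compatible r) :
    Valuational r ↔ ∀ g : G, VType r g := by
  simp only [hc.vtype_iff_antisymmRel_neg]
  refine ⟨fun hval => hval.antisymmRel_neg, fun hneg => ?_⟩
  exact hc.1.valuational hc.2.1 (fun x => hc.zero_le (hneg x).2) hneg
    fun _ _ => hc.add_le_of_le hneg
end

section
/- Let (G,≾) be a compatible quasi-ordered abelian group and H a ≾-convex subgroup of G. Then either H ⊆ G^o or G^o ⊆ H; moreover, if G^o ⊆ H, then H is an initial segment of G. -/
universe u

variable {G : Type u} [AddCommGroup G]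

/-- If `x ≺ 0` then `0 ≾ -x`. -/
lemma negpos (r : G → G → Prop) (hc : Compatible r) {x : G}
    (h1 : r x 0) (h2 : ¬ r 0 x) : r 0 (-x) := by
  have q1 := hc.2.1
  have q2 := hc.2.2
  have hx0 : x ≠ 0 := fun h => h2 (h ▸ hc.1.1 0)
  have hn : ¬ (r 0 (-x) ∧ r (-x) 0) := by
    rintro ⟨h3, h4⟩
    exact hx0 (neg_eq_zero.mp (q1 (-x) h4 h3))
  have := q2 x 0 (-x) h1 hn
  simpa using this

/-- Every v-type element is `≿ 0`. -/
lemma vnonneg (r : G → G → Prop) (hc : Compatible r) {g : G}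
    (hv : VType r g) : r 0 g := by
  have tr := hc.1.2.1
  have tot := hc.1.2.2
  have q1 := hc.2.1
  have q2 := hc.2.2
  by_contra h0g
  have hg0 : r g 0 := (tot g 0).resolve_right h0g
  have hgne : g ≠ 0 := fun h => h0g (h ▸ hc.1.1 0)
  rcases hv with ⟨h, hne, hhg, hgh⟩ | h2
  · have hh0 : r h 0 := tr _ _ _ hhg hg0
    have h0h : ¬ r 0 h := fun hx => h0g (tr _ _ _ hx hhg)
    have hng : ¬ (r g (-g) ∧ r (-g) g) := by
      rintro ⟨_, h4⟩
      have h5 : r (-g) 0 := tr _ _ _ h4 hg0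
      have h6 : r 0 (-g) := negpos r hc hg0 h0g
      exact hgne (neg_eq_zero.mp (q1 (-g) h5 h6))
    have hnh : ¬ (r h (-h) ∧ r (-h) h) := by
      rintro ⟨_, h4⟩
      have h5 : r (-h) 0 := tr _ _ _ h4 hh0
      have h6 : r 0 (-h) := negpos r hc hh0 h0h
      have h7 : h = 0 := neg_eq_zero.mp (q1 (-h) h5 h6)
      exact h0h (h7 ▸ hc.1.1 0)
    have d1 : r (h + -g) 0 := by simpa using q2 h g (-g) hhg hng
    have d2 : r (g + -h) 0 := by simpa using q2 g h (-h) hgh hnh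
    have hdne : h + -g ≠ 0 := fun hd => hne (by rwa [add_neg_eq_zero] at hd)
    by_cases hx : r 0 (h + -g)
    · exact hdne (q1 _ d1 hx)
    · have h6 := negpos r hc d1 hx
      have h7 : r (-(h + -g)) 0 := by
        have e : -(h + -g) = g + -h := by abel
        rw [e]; exact d2
      exact hdne (neg_eq_zero.mp (q1 _ h7 h6))
  · have hgeq : g = -g := eq_neg_of_add_eq_zero_left h2
    have h6 := negpos r hc hg0 h0g
    rw [← hgeq] at h6
    exact h0g h6

/-- Every v-type element satisfies `g ∼ -g`. -/
lemma vsim (r : G → G → Prop) (hc : Compatible r) {g : G}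
    (hv : VType r g) : r g (-g) ∧ r (-g) g := by
  have tr := hc.1.2.1
  have tot := hc.1.2.2
  have q1 := hc.2.1
  have q2 := hc.2.2
  rcases hv with ⟨h, hne, hhg, hgh⟩ | h2
  swap
  · have hgeq : g = -g := eq_neg_of_add_eq_zero_left h2
    rw [← hgeq]; exact ⟨hc.1.1 g, hc.1.1 g⟩
  have hvg : VType r g := Or.inl ⟨h, hne, hhg, hgh⟩
  have hvh : VType r h := Or.inl ⟨g, fun e => hne e.symm, hgh, hhg⟩
  have h0g : r 0 g := vnonneg r hc hvg
  have h0h : r 0 h := vnonneg r hc hvh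
  have hgne : g ≠ 0 := by
    rintro rfl
    exact hne (q1 h hhg hgh)
  by_contra hcon
  have hgng : ¬ r g (-g) := by
    intro hgn
    have h0n : r 0 (-g) := tr _ _ _ h0g hgn
    have hnn : ¬ (r (-g) g ∧ r g (-g)) := fun hp => hcon ⟨hp.2, hp.1⟩
    have h8 := q2 0 (-g) g h0n hnn
    have hg0 : r g 0 := by simpa using h8
    exact hgne (q1 g hg0 h0g)
  have hq2cond : ¬ (r g (-g) ∧ r (-g) g) := fun hp => hgng hp.1
  have d1 : r (h + -g) 0 := by simpa using q2 h g (-g) hhg hq2cond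
  by_cases hsh : r h (-h) ∧ r (-h) h
  · have hnh_g : r (-h) g := tr _ _ _ hsh.2 hhg
    have hg_nh : r g (-h) := tr _ _ _ hgh hsh.1
    have e1 : r (-h + -g) 0 := by simpa using q2 (-h) g (-g) hnh_g hq2cond
    have cond2 : ¬ (r (-h) (-g) ∧ r (-g) (-h)) := by
      rintro ⟨a, b⟩
      exact hgng (tr _ _ _ hg_nh a)
    have e2 : r 0 (-h + -g) := by simpa using q2 g (-h) (-g) hg_nh cond2
    have hz0 : -h + -g = 0 := q1 _ e1 e2
    have hz : h + g = 0 := by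
      have h8 : -(h + g) = 0 := by rw [neg_add]; exact hz0
      exact neg_eq_zero.mp h8
    have h9 : -g = h := neg_eq_of_add_eq_zero_left hz
    exact hgng (by rw [h9]; exact hgh)
  · have d2 : r (g + -h) 0 := by simpa using q2 g h (-h) hgh hsh
    have hdne : h + -g ≠ 0 := fun hd => hne (by rwa [add_neg_eq_zero] at hd)
    by_cases hx : r 0 (h + -g)
    · exact hdne (q1 _ d1 hx)
    · have h6 := negpos r hc d1 hx
      have h7 : r (-(h + -g)) 0 := by
        have e : -(h + -g) = g + -h := by abel
        rw [e]; exact d2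
      exact hdne (neg_eq_zero.mp (q1 _ h7 h6))

lemma not_otype (r : G → G → Prop) (hc : Compatible r) {g : G} (h : ¬ OType r g) :
    VType r g ∧ g ≠ 0 := by
  have hgne : g ≠ 0 := by
    rintro rfl
    exact h ⟨fun h' hh1 hh2 => hc.2.1 h' hh1 hh2, fun _ => rfl⟩
  rw [OType, not_and_or] at h
  rcases h with h | h
  · push_neg at h
    obtain ⟨x, hx1, hx2, hx3⟩ := h
    exact ⟨Or.inl ⟨x, hx3, hx1, hx2⟩, hgne⟩
  · push_neg at h
    exact ⟨Or.inr h.1, hgne⟩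

lemma oneg (r : G → G → Prop) (hc : Compatible r) {a : G} (ho : OType r a) :
    OType r (-a) := by
  by_contra hcon
  obtain ⟨hv, hna⟩ := not_otype r hc hcon
  obtain ⟨s1, s2⟩ := vsim r hc hv
  rw [neg_neg] at s1 s2
  have heq : -a = a := ho.1 (-a) s1 s2
  have hz : a + a = 0 := add_eq_zero_iff_eq_neg.mpr heq.symm
  exact hna (by rw [ho.2 hz, neg_zero])

/-- An o-type element is `≾` any nonzero v-type element. -/
lemma o_le_v (r : G → G → Prop) (hc : Compatible r) {a g : G}
    (ho : OType r a) (hv : VType r g) (hg : g ≠ 0) : r a g := by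
  have tr := hc.1.2.1
  have tot := hc.1.2.2
  have q2 := hc.2.2
  by_contra hag
  have hga : r g a := (tot a g).resolve_left hag
  have h0g : r 0 g := vnonneg r hc hv
  obtain ⟨s1, s2⟩ := vsim r hc hv
  have h0ng : r 0 (-g) := tr _ _ _ h0g s1
  have hang : ¬ r a (-g) := fun hx => hag (tr _ _ _ hx s2)
  have c1 : ¬ (r g a ∧ r a g) := fun hp => hag hp.2
  have t1 : r a (g + a) := by simpa using q2 0 g a h0g c1
  have c2 : ¬ (r (-g) a ∧ r a (-g)) := fun hp => hang hp.2
  have t2 : r a (-g + a) := by simpa using q2 0 (-g) a h0ng c2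
  have c3 : ¬ (r (-g + a) g ∧ r g (-g + a)) := by
    rintro ⟨hx, _⟩
    exact hag (tr _ _ _ t2 hx)
  have t3 : r (a + g) a := by
    have h8 := q2 a (-g + a) g t2 c3
    have e : (-g + a) + g = a := by abel
    rwa [e] at h8
  have t1' : r a (a + g) := by rwa [add_comm] at t1
  have heq : a + g = a := ho.1 (a + g) t3 t1'
  apply hg
  have := congrArg (fun x => -a + x) heq
  simpa [add_comm, add_left_comm] using this

/-- if `H` is a `≾`-convex subgroup of a compatible q.o.a.g,
then `H ⊆ G^o` or `G^o ⊆ H`; and if `G^o ⊆ H` then `H` is an initial segment. -/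
theorem convex_subgroup_dichotomy (r : G → G → Prop) (hc : Compatible r)
    (H : AddSubgroup G)
    (hconv : ∀ s t a : G, s ∈ H → t ∈ H → r s a → r a t → a ∈ H) :
    ((∀ g ∈ H, OType r g) ∨ (∀ g : G, OType r g → g ∈ H)) ∧
    ((∀ g : G, OType r g → g ∈ H) → ∀ s ∈ H, ∀ a : G, r a s → a ∈ H) := by
  have tot := hc.1.2.2
  constructor
  · by_cases hH : ∀ g ∈ H, OType r g
    · exact Or.inl hH
    · right
      push_neg at hH
      obtain ⟨g0, hg0H, hg0⟩ := hH
      obtain ⟨hv0, hne0⟩ := not_otype r hc hg0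
      intro a ha
      have hag : r a g0 := o_le_v r hc ha hv0 hne0
      by_cases h0a : r 0 a
      · exact hconv 0 g0 a H.zero_mem hg0H h0a hag
      · have ha0 : r a 0 := (tot a 0).resolve_right h0a
        have h0na : r 0 (-a) := negpos r hc ha0 h0a
        have hna : OType r (-a) := oneg r hc ha
        have hnag : r (-a) g0 := o_le_v r hc hna hv0 hne0
        have hmem : -a ∈ H := hconv 0 g0 (-a) H.zero_mem hg0H h0na hnag
        simpa using H.neg_mem hmem
  · intro hGo s hs a has
    by_cases h0a : r 0 a
    · exact hconv 0 s a H.zero_mem hs h0a has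
    · by_cases hoa : OType r a
      · exact hGo a hoa
      · obtain ⟨hv, _⟩ := not_otype r hc hoa
        exact absurd (vnonneg r hc hv) h0a
end

section
/- Let (G,≾) be a compatible quasi-ordered abelian group and H a ≾-convex subgroup of G. Then: (i) for all g₁, g₂ ∈ G with g₁ − g₂ ∉ H and g₁ ≾ g₂, one has g₁ + h₁ ≾ g₂ + h₂ for all h₁, h₂ ∈ H (so ≾ induces a well-defined total quasi-order on G/H by g + H ≾ h + H ⇔ g − h ∈ H ∨ (g − h ∉ H ∧ g ≾ h)); (ii) this induced quasi-order on G/H again satisfies (Q1) and (Q2); (iii) the canonical projection G → G/H is a homomorphism of quasi-ordered groups, i.e. g ≾ h implies g + H ≾ h + H. -/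
universe u

variable {G : Type u} [AddCommGroup G]

/-- Translation of an equivalence `x ∼ y` by `z`, provided `¬ (y ∼ z)`. -/
private lemma aux_transe {r : G → G → Prop} (hc : Compatible r) {x y z : G}
    (hxy : r x y ∧ r y x) (hyz : ¬(r y z ∧ r z y)) :
    r (x + z) (y + z) ∧ r (y + z) (x + z) := by
  refine ⟨hc.2.2 x y z hxy.1 hyz, hc.2.2 y x z hxy.2 ?_⟩
  rintro ⟨h1, h2⟩
  exact hyz ⟨hc.1.2.1 y x z hxy.2 h1, hc.1.2.1 z x y h2 hxy.1⟩

/-- If the `∼`-class of `x` contains another element, then `x ∼ -x`. -/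
private lemma aux_vclass {r : G → G → Prop} (hc : Compatible r) {x y : G}
    (hxy : r x y ∧ r y x) (hne : x ≠ y) : r x (-x) ∧ r (-x) x := by
  by_cases h : r y (-x) ∧ r (-x) y
  · exact ⟨hc.1.2.1 x y (-x) hxy.1 h.1, hc.1.2.1 (-x) y x h.2 hxy.2⟩
  · have h2 := aux_transe hc hxy h
    rw [add_neg_cancel] at h2
    have h3 := hc.2.1 (y + -x) h2.2 h2.1
    have h4 : y = x := by
      have h5 : y - x = 0 := by rwa [sub_eq_add_neg]
      exact sub_eq_zero.mp h5
    exact absurd h4.symm hne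

/-- A strictly negative element is not `∼` to its own negative. -/
private lemma aux_neg_otype {r : G → G → Prop} (hc : Compatible r) {x : G}
    (h1 : r x 0) (h2 : ¬ r 0 x) : ¬(r x (-x) ∧ r (-x) x) := by
  rintro ⟨-, hnx⟩
  have hx0 : r (-x) 0 := hc.1.2.1 (-x) x 0 hnx h1
  have h3 := hc.2.2 (-x) 0 x hx0 (fun c => h2 c.1)
  rw [neg_add_cancel, zero_add] at h3
  exact h2 h3

/-- An element outside a convex subgroup lies strictly on one side of it. -/
private lemma aux_side {r : G → G → Prop} (hc : Compatible r) {H : AddSubgroup G}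
    (hconv : ∀ s t a : G, s ∈ H → t ∈ H → r s a → r a t → a ∈ H)
    {x : G} (hx : x ∉ H) :
    (∀ k ∈ H, r x k ∧ ¬ r k x) ∨ (∀ k ∈ H, r k x ∧ ¬ r x k) := by
  by_cases hex : ∃ k ∈ H, r k x
  · obtain ⟨k₀, hk₀, hk₀x⟩ := hex
    right
    intro k hk
    have hnxk : ¬ r x k := fun hxk => hx (hconv k₀ k x hk₀ hk hk₀x hxk)
    exact ⟨(hc.1.2.2 x k).resolve_left hnxk, hnxk⟩
  · left
    push_neg at hex
    intro k hk
    exact ⟨(hc.1.2.2 x k).resolve_right (hex k hk), hex k hk⟩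

/-- An element outside a convex subgroup is not `∼` to any element of it. -/
private lemma aux_ne_cls {r : G → G → Prop} (hc : Compatible r) {H : AddSubgroup G}
    (hconv : ∀ s t a : G, s ∈ H → t ∈ H → r s a → r a t → a ∈ H)
    {x k : G} (hx : x ∉ H) (hk : k ∈ H) : ¬(r x k ∧ r k x) := by
  rcases aux_side hc hconv hx with h | h
  · exact fun c => (h k hk).2 c.2
  · exact fun c => (h k hk).2 c.1

/-- Key valuation-like lemma: if `b ∉ H` is above `H`, `b ∼ -b`, and `h ∈ H`,
then `b + h ∼ b`. -/
private lemma aux_add_small {r : G → G → Prop} (hc : Compatible r) {H : AddSubgroup G}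
    (hconv : ∀ s t a : G, s ∈ H → t ∈ H → r s a → r a t → a ∈ H)
    {b : G} (hbH : b ∉ H) (hub : ∀ k ∈ H, r k b)
    (hvb : r b (-b) ∧ r (-b) b) {h : G} (hh : h ∈ H) :
    r (b + h) b ∧ r b (b + h) := by
  have htrans := hc.1.2.1
  have htot := hc.1.2.2
  have hq1 := hc.2.1
  have hq2 := hc.2.2
  have hnbH : -b ∉ H := fun c => hbH (by simpa using neg_mem c)
  by_cases h2b : b + b = 0
  · have hkey : r b (h + b) ∧ r (h + b) b := by
      by_contra hk
      have step := hq2 (-h) b (h + b) (hub (-h) (neg_mem hh)) hk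
      rw [show -h + (h + b) = b by abel, show b + (h + b) = b + b + h by abel,
        h2b, zero_add] at step
      exact aux_ne_cls hc hconv hbH hh ⟨step, hub h hh⟩
    exact ⟨by rw [add_comm b h]; exact hkey.2, by rw [add_comm b h]; exact hkey.1⟩
  · have e1a : r (b + h) (-b + h) := hq2 b (-b) h hvb.1 (aux_ne_cls hc hconv hnbH hh)
    have e1b : r (-b + h) (b + h) := hq2 (-b) b h hvb.2 (aux_ne_cls hc hconv hbH hh)
    by_cases e2 : r (-b + h) (b - h) ∧ r (b - h) (-b + h)
    · have hbmH : b - h ∉ H := fun c => hbH (by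
        have h5 := add_mem c hh
        rwa [show b - h + h = b by abel] at h5)
      constructor
      · by_contra hn
        have hba : r b (b + h) := (htot (b + h) b).resolve_left hn
        have c1 : r b (-b + h) := htrans _ _ _ hba e1a
        have c2 : r b (b - h) := htrans _ _ _ c1 e2.1
        have step := hq2 b (b - h) h c2 (aux_ne_cls hc hconv hbmH hh)
        rw [show b - h + h = b by abel] at step
        exact hn step
      · by_contra hn
        have hba : r (b + h) b := (htot (b + h) b).resolve_right hn
        have c1 : r (b - h) (b + h) := htrans _ _ _ e2.2 e1b
        have c2 : r (b - h) b := htrans _ _ _ c1 hba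
        have step := hq2 (b - h) b h c2 (aux_ne_cls hc hconv hbH hh)
        rw [show b - h + h = b by abel] at step
        exact hn step
    · exfalso
      have h6 := aux_transe hc ⟨e1a, e1b⟩ e2
      rw [show b + h + (b - h) = b + b by abel, show -b + h + (b - h) = (0 : G) by abel] at h6
      exact h2b (hq1 (b + b) h6.1 h6.2)

/-- Part 1: if `a - b ∉ H` and `a ≾ b`, then `a ≾ b + h` for `h ∈ H`. -/
private lemma aux_part1 {r : G → G → Prop} (hc : Compatible r) {H : AddSubgroup G}
    (hconv : ∀ s t a : G, s ∈ H → t ∈ H → r s a → r a t → a ∈ H)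
    {a b h : G} (hd : a - b ∉ H) (hab : r a b) (hh : h ∈ H) : r a (b + h) := by
  have htrans := hc.1.2.1
  have htot := hc.1.2.2
  have hq1 := hc.2.1
  have hq2 := hc.2.2
  by_contra hn
  have hba : r (b + h) a := (htot a (b + h)).resolve_left hn
  by_cases hebb : r b (-b) ∧ r (-b) b
  · by_cases hbH : b ∈ H
    · have haH : a ∉ H := fun c => hd (sub_mem c hbH)
      rcases aux_side hc hconv haH with hbel | habv
      · exact (hbel (b + h) (add_mem hbH hh)).2 hba
      · exact (habv b hbH).2 hab
    · rcases aux_side hc hconv hbH with hbel | habv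
      · exact aux_neg_otype hc (hbel 0 (zero_mem H)).1 (hbel 0 (zero_mem H)).2 hebb
      · have hU := aux_add_small hc hconv hbH (fun k hk => (habv k hk).1) hebb hh
        exact hn (htrans a b (b + h) hab hU.2)
  · by_cases heab : r a (-b) ∧ r (-b) a
    · by_cases haeq : a = -b
      · subst haeq
        -- edge case a = -b
        have hsnb : ¬ r b (-b) := fun c => hebb ⟨c, hab⟩
        have h2bH : b + b ∉ H := fun c => hd (by
          have h5 := neg_mem c
          rwa [show -(b + b) = -b - b by abel] at h5)
        have hbH' : b ∉ H := fun c => h2bH (add_mem c c)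
        have hnbH : -b ∉ H := fun c => hbH' (by simpa using neg_mem c)
        have hne0 : h ≠ 0 := by
          rintro rfl
          rw [add_zero] at hba
          exact hsnb hba
        have step1 := hq2 (-b) b (-b) hab hebb
        rw [show b + -b = (0 : G) by abel] at step1
        -- step1 : r (-b + -b) 0
        have step2 := hq2 (b + h) (-b) (-h) hba (aux_ne_cls hc hconv hnbH (neg_mem hh))
        rw [show b + h + -h = b by abel] at step2
        -- step2 : r b (-b + -h)
        have cond3 : ¬(r (-b + -h) (-b) ∧ r (-b) (-b + -h)) := by
          intro c
          have hne : (-b : G) ≠ -b + -h := by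
            intro w
            apply hne0
            have h7 : (0 : G) = -h := by
              apply add_left_cancel (a := -b)
              rw [add_zero]
              exact w
            exact neg_eq_zero.mp h7.symm
          have hv := aux_vclass hc ⟨c.2, c.1⟩ hne
          rw [neg_neg] at hv
          exact hebb ⟨hv.2, hv.1⟩
        have step3 := hq2 b (-b + -h) (-b) step2 cond3
        rw [show b + -b = (0 : G) by abel] at step3
        -- step3 : r 0 (-b + -h + -b)
        have hDH : -b + -h + -b ∉ H := by
          intro c
          apply h2bH
          have h5 := neg_mem (add_mem c hh)
          rwa [show -(-b + -h + -b + h) = b + b by abel] at h5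
        have step4 := hq2 0 (-b + -h + -b) h step3 (aux_ne_cls hc hconv hDH hh)
        rw [zero_add, show -b + -h + -b + h = -(b + b) by abel] at step4
        -- step4 : r h (-(b+b))
        rw [show -b + -b = -(b + b) by abel] at step1
        have hmem := hconv h 0 (-(b + b)) hh (zero_mem H) step4 step1
        exact h2bH (by simpa using neg_mem hmem)
      · have hv := aux_vclass hc ⟨heab.2, heab.1⟩ (fun c => haeq c.symm)
        rw [neg_neg] at hv
        exact hebb ⟨hv.2, hv.1⟩
    · have u1 := hq2 (b + h) a (-b) hba heab
      rw [show b + h + -b = h by abel, show a + -b = a - b by abel] at u1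
      have u2 := hq2 a b (-b) hab hebb
      rw [show a + -b = a - b by abel, show b + -b = (0 : G) by abel] at u2
      exact hd (hconv h 0 (a - b) hh (zero_mem H) u1 u2)

/-- Part 2: if `a - b ∉ H` and `a ≾ b`, then `a + h ≾ b` for `h ∈ H`. -/
private lemma aux_part2 {r : G → G → Prop} (hc : Compatible r) {H : AddSubgroup G}
    (hconv : ∀ s t a : G, s ∈ H → t ∈ H → r s a → r a t → a ∈ H)
    {a b h : G} (hd : a - b ∉ H) (hab : r a b) (hh : h ∈ H) : r (a + h) b := by
  have htrans := hc.1.2.1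
  have htot := hc.1.2.2
  have hq1 := hc.2.1
  have hq2 := hc.2.2
  by_contra hn
  have hba : r b (a + h) := (htot (a + h) b).resolve_left hn
  by_cases heaa : r a (-a) ∧ r (-a) a
  · by_cases haH : a ∈ H
    · have hbH : b ∉ H := fun c => hd (sub_mem haH c)
      rcases aux_side hc hconv hbH with hbel | habv
      · exact (hbel a haH).2 hab
      · exact hn (habv (a + h) (add_mem haH hh)).1
    · rcases aux_side hc hconv haH with hbel | habv
      · exact aux_neg_otype hc (hbel 0 (zero_mem H)).1 (hbel 0 (zero_mem H)).2 heaa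
      · have hU := aux_add_small hc hconv haH (fun k hk => (habv k hk).1) heaa hh
        exact hn (htrans (a + h) a b hU.1 hab)
  · by_cases hbeq : b = -a
    · subst hbeq
      -- edge case b = -a
      have hstr : ¬ r (-a) a := fun c => heaa ⟨hab, c⟩
      have h2aH : a + a ∉ H := fun c => hd (by
        rw [show a - -a = a + a by abel]; exact c)
      have haH' : a ∉ H := fun c => h2aH (add_mem c c)
      have h2a0 : a + a ≠ 0 := by
        intro c
        have hma : a = -a := eq_neg_of_add_eq_zero_left c
        rw [← hma] at hstr
        exact hstr (hc.1.1 a)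
      have cond6 : ¬(r (a + h) (-a) ∧ r (-a) (a + h)) := by
        intro c
        by_cases hq : a + h = -a
        · apply h2aH
          have h2 : a + a + h = 0 := by
            rw [show a + a + h = a + (a + h) by abel, hq, add_neg_cancel]
          have h3 : a + a = -h := eq_neg_of_add_eq_zero_left h2
          rw [h3]
          exact neg_mem hh
        · have hv := aux_vclass hc ⟨c.2, c.1⟩ (fun w => hq w.symm)
          rw [neg_neg] at hv
          exact heaa ⟨hv.2, hv.1⟩
      have v1 := hq2 (-a) (a + h) (-a) hba cond6
      rw [show a + h + -a = h by abel] at v1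
      -- v1 : r (-a + -a) h
      have v2 := hq2 a (-a) a hab (fun c => hstr c.1)
      rw [show -a + a = (0 : G) by abel] at v2
      -- v2 : r (a + a) 0
      have v3 := hq2 (a + a) 0 (-a + -a) v2 (by
        rintro ⟨c1, c2⟩
        apply h2a0
        have h5 := hq1 (-a + -a) c2 c1
        have h6 : -(a + a) = 0 := by rwa [show -(a + a) = -a + -a by abel]
        exact neg_eq_zero.mp h6)
      rw [show a + a + (-a + -a) = (0 : G) by abel, zero_add] at v3
      -- v3 : r 0 (-a + -a)
      have hmem := hconv 0 h (-a + -a) (zero_mem H) hh v3 v1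
      exact h2aH (by
        have h5 := neg_mem hmem
        rwa [show -(-a + -a) = a + a by abel] at h5)
    · by_cases heba : r b (-a) ∧ r (-a) b
      · have hv := aux_vclass hc ⟨heba.2, heba.1⟩ (fun c => hbeq c.symm)
        rw [neg_neg] at hv
        exact heaa ⟨hv.2, hv.1⟩
      · by_cases heha : r (a + h) (-a) ∧ r (-a) (a + h)
        · -- edge case a + h = -a
          have hq : a + h = -a := by
            by_contra hq
            have hv := aux_vclass hc ⟨heha.2, heha.1⟩ (fun w => hq w.symm)
            rw [neg_neg] at hv
            exact heaa ⟨hv.2, hv.1⟩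
          have hn' : ¬ r (-a) b := by rw [hq] at hn; exact hn
          have hba' : r b (-a) := by rw [hq] at hba; exact hba
          have h2a0 : a + a ≠ 0 := by
            intro c
            have hma : a = -a := eq_neg_of_add_eq_zero_left c
            exact hn' (by rw [← hma]; exact hab)
          have hgam := hq2 a b (-a) hab heba
          rw [show a + -a = (0 : G) by abel] at hgam
          -- hgam : r 0 (b + -a)
          have hdel := hq2 b (-a) a hba' (fun c => heaa ⟨c.2, c.1⟩)
          rw [show -a + a = (0 : G) by abel] at hdel
          -- hdel : r (b + a) 0
          have heps := hq2 (b + a) 0 (-a + -a) hdel (by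
            rintro ⟨c1, c2⟩
            apply h2a0
            have h5 := hq1 (-a + -a) c2 c1
            have h6 : -(a + a) = 0 := by rwa [show -(a + a) = -a + -a by abel]
            exact neg_eq_zero.mp h6)
          rw [show b + a + (-a + -a) = b + -a by abel, zero_add] at heps
          -- heps : r (b + -a) (-a + -a)
          have hh2 : -a + -a = h := by
            have h2 : a + a + h = 0 := by
              rw [show a + a + h = a + (a + h) by abel, hq, add_neg_cancel]
            have h3 : a + a = -h := eq_neg_of_add_eq_zero_left h2
            rw [show -a + -a = -(a + a) by abel, h3, neg_neg]
          rw [hh2] at heps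
          have hmem := hconv 0 h (b + -a) (zero_mem H) hh hgam heps
          exact hd (by
            have h5 := neg_mem hmem
            rwa [show -(b + -a) = a - b by abel] at h5)
        · -- generic case: convexity argument
          have w1 := hq2 b (a + h) (-a) hba heha
          rw [show a + h + -a = h by abel] at w1
          -- w1 : r (b + -a) h
          have w2 := hq2 a b (-a) hab heba
          rw [show a + -a = (0 : G) by abel] at w2
          -- w2 : r 0 (b + -a)
          have hmem := hconv 0 h (b + -a) (zero_mem H) hh w2 w1
          exact hd (by
            have h5 := neg_mem hmem
            rwa [show -(b + -a) = a - b by abel] at h5)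

/-- if `H` is a `≾`-convex subgroup of a compatible q.o.a.g
`(G, ≾)`, then the condition of the quotient lemma holds, so `≾` induces a
well-defined total quasi-order on `G ⧸ H` which is again compatible, and the
canonical projection preserves the quasi-order. -/
theorem quotient_by_convex_subgroup_compatible (r : G → G → Prop)
    (hc : Compatible r) (H : AddSubgroup G)
    (hconv : ∀ s t a : G, s ∈ H → t ∈ H → r s a → r a t → a ∈ H) :
    (∀ g₁ g₂ : G, g₁ - g₂ ∉ H → r g₁ g₂ →
      ∀ h₁ ∈ H, ∀ h₂ ∈ H, r (g₁ + h₁) (g₂ + h₂)) ∧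
    ∃ R : G ⧸ H → G ⧸ H → Prop,
      (∀ g h : G, R (g : G ⧸ H) (h : G ⧸ H) ↔
        (g - h ∈ H ∨ (g - h ∉ H ∧ r g h))) ∧
      Compatible R ∧
      (∀ g h : G, r g h → R (g : G ⧸ H) (h : G ⧸ H)) := by
  have htrans := hc.1.2.1
  have htot := hc.1.2.2
  have hq1 := hc.2.1
  have hq2 := hc.2.2
  have key : ∀ g₁ g₂ : G, g₁ - g₂ ∉ H → r g₁ g₂ →
      ∀ h₁ ∈ H, ∀ h₂ ∈ H, r (g₁ + h₁) (g₂ + h₂) := by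
    intro g₁ g₂ hd hr h₁ hh₁ h₂ hh₂
    have s1 : r g₁ (g₂ + h₂) := aux_part1 hc hconv hd hr hh₂
    have hd2 : g₁ - (g₂ + h₂) ∉ H := by
      intro c
      apply hd
      have h5 := add_mem c hh₂
      rwa [show g₁ - (g₂ + h₂) + h₂ = g₁ - g₂ by abel] at h5
    exact aux_part2 hc hconv hd2 s1 hh₁
  refine ⟨key, ?_⟩
  classical
  set P : G → G → Prop := fun g h => g - h ∈ H ∨ (g - h ∉ H ∧ r g h) with hPdef
  have hlift : ∀ g g' h h' : G, g - g' ∈ H → h - h' ∈ H → P g' h' → P g h := by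
    intro g g' h h' hg hh hp
    have hgh : g - h - (g' - h') ∈ H := by
      have h5 := sub_mem hg hh
      rwa [show g - g' - (h - h') = g - h - (g' - h') by abel] at h5
    rcases hp with hp | ⟨hp1, hp2⟩
    · refine Or.inl ?_
      have h5 := add_mem hgh hp
      rwa [show g - h - (g' - h') + (g' - h') = g - h by abel] at h5
    · refine Or.inr ⟨?_, ?_⟩
      · intro c
        apply hp1
        have h5 := sub_mem c hgh
        rwa [show g - h - (g - h - (g' - h')) = g' - h' by abel] at h5
      · have h5 := key g' h' hp1 hp2 (g - g') hg (h - h') hh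
        rwa [show g' + (g - g') = g by abel, show h' + (h - h') = h by abel] at h5
  set R : G ⧸ H → G ⧸ H → Prop :=
    fun x y => ∃ g h : G, (g : G ⧸ H) = x ∧ (h : G ⧸ H) = y ∧ P g h with hRdef
  have hmem : ∀ g h : G, (g : G ⧸ H) = (h : G ⧸ H) → g - h ∈ H := by
    intro g h hgh
    have h5 := QuotientAddGroup.eq.mp hgh
    have h6 := neg_mem h5
    rwa [show -(-g + h) = g - h by abel] at h6
  have hiff : ∀ g h : G, R (g : G ⧸ H) (h : G ⧸ H) ↔ P g h := by
    intro g h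
    constructor
    · rintro ⟨g', h', hg', hh', hp⟩
      exact hlift g g' h h' (hmem g g' hg'.symm) (hmem h h' hh'.symm) hp
    · intro hp
      exact ⟨g, h, rfl, rfl, hp⟩
  have hRrefl : ∀ x, R x x := by
    intro x
    refine QuotientAddGroup.induction_on x fun g => ?_
    exact (hiff g g).mpr (Or.inl (by rw [sub_self]; exact zero_mem H))
  have hRtrans : ∀ x y z, R x y → R y z → R x z := by
    intro x y z
    refine QuotientAddGroup.induction_on x fun g => ?_
    refine QuotientAddGroup.induction_on y fun h => ?_
    refine QuotientAddGroup.induction_on z fun k => ?_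
    intro h1 h2
    rw [hiff] at h1 h2 ⊢
    rcases h1 with h1 | ⟨h1a, h1b⟩
    · rcases h2 with h2 | ⟨h2a, h2b⟩
      · refine Or.inl ?_
        have h5 := add_mem h1 h2
        rwa [show g - h + (h - k) = g - k by abel] at h5
      · refine Or.inr ⟨?_, ?_⟩
        · intro c
          apply h2a
          have h5 := sub_mem c h1
          rwa [show g - k - (g - h) = h - k by abel] at h5
        · have h5 := key h k h2a h2b (g - h) h1 0 (zero_mem H)
          rwa [show h + (g - h) = g by abel, add_zero] at h5
    · rcases h2 with h2 | ⟨h2a, h2b⟩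
      · refine Or.inr ⟨?_, ?_⟩
        · intro c
          apply h1a
          have h5 := sub_mem c h2
          rwa [show g - k - (h - k) = g - h by abel] at h5
        · have hkh : k - h ∈ H := by
            have h5 := neg_mem h2
            rwa [neg_sub] at h5
          have h5 := key g h h1a h1b 0 (zero_mem H) (k - h) hkh
          rwa [add_zero, show h + (k - h) = k by abel] at h5
      · by_cases hgk : g - k ∈ H
        · exact Or.inl hgk
        · exact Or.inr ⟨hgk, htrans g h k h1b h2b⟩
  have hRtot : ∀ x y, R x y ∨ R y x := by
    intro x y
    refine QuotientAddGroup.induction_on x fun g => ?_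
    refine QuotientAddGroup.induction_on y fun h => ?_
    by_cases hgh : g - h ∈ H
    · exact Or.inl ((hiff g h).mpr (Or.inl hgh))
    · have hhg : h - g ∉ H := by
        intro c
        apply hgh
        have h5 := neg_mem c
        rwa [neg_sub] at h5
      rcases htot g h with hr | hr
      · exact Or.inl ((hiff g h).mpr (Or.inr ⟨hgh, hr⟩))
      · exact Or.inr ((hiff h g).mpr (Or.inr ⟨hhg, hr⟩))
  have hRq1 : AxQ1 R := by
    intro x
    refine QuotientAddGroup.induction_on x fun g => ?_
    intro h1 h2
    rw [← QuotientAddGroup.mk_zero, hiff] at h1 h2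
    rcases h1 with h1 | ⟨h1a, h1b⟩
    · rw [sub_zero] at h1
      exact (QuotientAddGroup.eq_zero_iff g).mpr h1
    · rcases h2 with h2 | ⟨h2a, h2b⟩
      · exfalso
        apply h1a
        have h5 := neg_mem h2
        rwa [show -(0 - g) = g - 0 by abel] at h5
      · have hg0 : g = 0 := hq1 g h1b h2b
        rw [hg0]
        rfl
  have hRq2 : AxQ2 R := by
    intro x y z
    refine QuotientAddGroup.induction_on x fun g => ?_
    refine QuotientAddGroup.induction_on y fun h => ?_
    refine QuotientAddGroup.induction_on z fun k => ?_
    intro hxy hyz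
    rw [hiff] at hxy
    rw [← QuotientAddGroup.mk_add, ← QuotientAddGroup.mk_add, hiff]
    have hsub : (g + k) - (h + k) = g - h := by abel
    rcases hxy with h1 | ⟨h1a, h1b⟩
    · exact Or.inl (by rwa [hsub])
    · refine Or.inr ⟨by rwa [hsub], ?_⟩
      refine hq2 g h k h1b ?_
      rintro ⟨c1, c2⟩
      apply hyz
      constructor
      · by_cases hhk : h - k ∈ H
        · exact (hiff h k).mpr (Or.inl hhk)
        · exact (hiff h k).mpr (Or.inr ⟨hhk, c1⟩)
      · by_cases hkh : k - h ∈ H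
        · exact (hiff k h).mpr (Or.inl hkh)
        · exact (hiff k h).mpr (Or.inr ⟨hkh, c2⟩)
  have hproj : ∀ g h : G, r g h → R (g : G ⧸ H) (h : G ⧸ H) := by
    intro g h hr
    by_cases hgh : g - h ∈ H
    · exact (hiff g h).mpr (Or.inl hgh)
    · exact (hiff g h).mpr (Or.inr ⟨hgh, hr⟩)
  exact ⟨R, hiff, ⟨⟨hRrefl, hRtrans, hRtot⟩, hRq1, hRq2⟩, hproj⟩
end

section
/- Let (G,≾_G) and (H,≾_H) be compatible quasi-ordered abelian groups and φ : G → H a homomorphism of quasi-ordered groups (a group homomorphism with g ≾_G h ⇒ φ(g) ≾_H φ(h)). Then ker φ is a ≾_G-convex subgroup of G, so ≾_G induces a compatible quasi-order on G/ker φ, and the map G/ker φ → H, g + ker φ ↦ φ(g), is an injective homomorphism of quasi-ordered groups. If moreover φ(g) ≾_H φ(h) ⇒ g ≾_G h for all g, h ∈ G, then this induced map also reflects the quasi-order (it is an embedding of quasi-ordered groups). -/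
universe u

variable {G : Type u} [AddCommGroup G]

section Aux

variable {rG : G → G → Prop} {K : AddSubgroup G}

/-- An element outside a convex subgroup is not `∼`-equivalent to any element of it. -/
private lemma aux_L1 (hconv : ∀ s t a : G, s ∈ K → t ∈ K → rG s a → rG a t → a ∈ K)
    {x k : G} (hx : x ∉ K) (hk : k ∈ K) : ¬(rG x k ∧ rG k x) :=
  fun h => hx (hconv k k x hk hk h.2 h.1)

private lemma aux_nma {x k : G} (hx : x ∉ K) (hk : k ∈ K) : x + k ∉ K :=
  fun hm => hx (by simpa using K.sub_mem hm hk)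

private lemma aux_excl (hconv : ∀ s t a : G, s ∈ K → t ∈ K → rG s a → rG a t → a ∈ K)
    {x : G} (hx : x ∉ K) (h1 : rG x 0) (h2 : rG 0 x) : False :=
  hx (hconv 0 0 x K.zero_mem K.zero_mem h2 h1)

private lemma aux_negAll (hc : Compatible rG)
    (hconv : ∀ s t a : G, s ∈ K → t ∈ K → rG s a → rG a t → a ∈ K)
    {x k : G} (hx : x ∉ K) (hk : k ∈ K) (hneg : rG x 0) : rG x k ∧ ¬ rG k x := by
  have h2 : ¬ rG k x := fun hkx => hx (hconv k 0 x hk K.zero_mem hkx hneg)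
  exact ⟨(hc.1.2.2 x k).resolve_right h2, h2⟩

private lemma aux_posAll (hc : Compatible rG)
    (hconv : ∀ s t a : G, s ∈ K → t ∈ K → rG s a → rG a t → a ∈ K)
    {x k : G} (hx : x ∉ K) (hk : k ∈ K) (hpos : rG 0 x) : rG k x ∧ ¬ rG x k := by
  have h2 : ¬ rG x k := fun hxk => hx (hconv 0 k x K.zero_mem hk hpos hxk)
  exact ⟨(hc.1.2.2 k x).resolve_right h2, h2⟩

private lemma aux_sgnNeg (hc : Compatible rG)
    (hconv : ∀ s t a : G, s ∈ K → t ∈ K → rG s a → rG a t → a ∈ K)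
    {x k : G} (hx : x ∉ K) (hk : k ∈ K) (hneg : rG x 0) : rG (x + k) 0 := by
  by_contra hcon
  have hxk : x + k ∉ K := aux_nma hx hk
  have hpos : rG 0 (x + k) := (hc.1.2.2 (x + k) 0).resolve_left hcon
  have h1 : rG k (x + k) := (aux_posAll hc hconv hxk hk hpos).1
  have h2 := hc.2.2 k (x + k) (-k) h1 (aux_L1 hconv hxk (K.neg_mem hk))
  have h3 : rG 0 x := by simpa using h2
  exact aux_excl hconv hx hneg h3

private lemma aux_sgnPos (hc : Compatible rG)
    (hconv : ∀ s t a : G, s ∈ K → t ∈ K → rG s a → rG a t → a ∈ K)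
    {x k : G} (hx : x ∉ K) (hk : k ∈ K) (hpos : rG 0 x) : rG 0 (x + k) := by
  by_contra hcon
  have hneg' : rG (x + k) 0 := (hc.1.2.2 (x + k) 0).resolve_right hcon
  have h1 := aux_sgnNeg hc hconv (aux_nma hx hk) (K.neg_mem hk) hneg'
  have h3 : rG x 0 := by simpa using h1
  exact aux_excl hconv hx h3 hpos

private lemma aux_shift (hc : Compatible rG)
    (hconv : ∀ s t a : G, s ∈ K → t ∈ K → rG s a → rG a t → a ∈ K)
    {a b k : G} (hb : b ∉ K) (hk : k ∈ K) (hab : rG a b) : rG (a + k) (b + k) :=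
  hc.2.2 a b k hab (aux_L1 hconv hb hk)

/-- Crux: translating the left-hand side of a strict-coset inequality by an
element of the convex subgroup. -/
private lemma aux_crux (hc : Compatible rG)
    (hconv : ∀ s t a : G, s ∈ K → t ∈ K → rG s a → rG a t → a ∈ K)
    {g h k : G} (hg : g ∉ K) (hh : h ∉ K) (hgh : g - h ∉ K) (hk : k ∈ K)
    (hr : rG g h) : rG (g + k) h := by
  have htrans := hc.1.2.1
  have htotal := hc.1.2.2
  have hq1 := hc.2.1
  have hq2 := hc.2.2
  by_contra hcon
  have hgk : g + k ∉ K := aux_nma hg hk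
  have h1 : rG h (g + k) := (htotal h (g + k)).resolve_right hcon
  have h2 : rG g (g + k) := htrans _ _ _ hr h1
  have h3 : ¬ rG (g + k) g := fun hx => hcon (htrans _ _ _ hx hr)
  have hng : -g ∉ K := fun hm => hg (by simpa using K.neg_mem hm)
  by_cases hsim : rG (g + k) (-g) ∧ rG (-g) (g + k)
  · have hne1 : ¬ (rG (g + k) g ∧ rG g (g + k)) := fun hx => h3 hx.1
    have hne2 : ¬ (rG (-g) g ∧ rG g (-g)) := fun hx => h3 (htrans _ _ _ hsim.1 hx.1)
    have hb := hq2 (g + k) (-g) g hsim.1 hne2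
    have hb' : rG (g + g + k) 0 := by
      have e1 : g + k + g = g + g + k := by abel
      have e2 : -g + g = (0 : G) := by abel
      rwa [e1, e2] at hb
    have hcge := hq2 (-g) (g + k) g hsim.2 hne1
    have hc' : rG 0 (g + g + k) := by
      have e1 : -g + g = (0 : G) := by abel
      have e2 : g + k + g = g + g + k := by abel
      rwa [e1, e2] at hcge
    have hzero : g + g + k = 0 := hq1 _ hb' hc'
    have hkey : g + k = -g := by
      have hzz : g + (g + k) = 0 := by rw [← hzero]; abel
      exact neg_eq_of_add_eq_zero_right hzz ▸ rfl
    rcases htotal g 0 with hgneg | hgpos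
    · have ha := hq2 g 0 (-g) hgneg
        (fun hx => aux_L1 hconv hng K.zero_mem ⟨hx.2, hx.1⟩)
      have ha' : rG 0 (-g) := by simpa using ha
      have hb2 : rG (g + k) 0 := aux_sgnNeg hc hconv hg hk hgneg
      rw [hkey] at hb2
      exact aux_excl hconv hng hb2 ha'
    · have hne3 : ¬ (rG g (-g) ∧ rG (-g) g) := fun hx => hne2 ⟨hx.2, hx.1⟩
      have ha := hq2 0 g (-g) hgpos hne3
      have ha' : rG (-g) 0 := by simpa using ha
      have hb2 : rG 0 (g + k) := aux_sgnPos hc hconv hg hk hgpos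
      rw [hkey] at hb2
      exact aux_excl hconv hng ha' hb2
  · have ha := hq2 h (g + k) (-g) h1 hsim
    have ha' : rG (h - g) k := by
      have e1 : h + -g = h - g := by abel
      have e2 : g + k + -g = k := by abel
      rwa [e1, e2] at ha
    have hhg : h - g ∉ K := fun hm => hgh (by simpa [neg_sub] using K.neg_mem hm)
    have hneg : rG (h - g) 0 := by
      by_contra hx
      have hpos : rG 0 (h - g) := (htotal (h - g) 0).resolve_left hx
      exact (aux_posAll hc hconv hhg hk hpos).2 ha'
    have hc1 : rG (h - g) (-k) := (aux_negAll hc hconv hhg (K.neg_mem hk) hneg).1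
    have hc2 := hq2 (h - g) (-k) g hc1
      (fun hx => aux_L1 hconv hg (K.neg_mem hk) ⟨hx.2, hx.1⟩)
    have hc2' : rG h (g - k) := by
      have e1 : h - g + g = h := by abel
      have e2 : -k + g = g - k := by abel
      rwa [e1, e2] at hc2
    have hgmk : g - k ∉ K := fun hm => hg (by simpa using K.add_mem hm hk)
    have hd := aux_shift hc hconv hgmk hk hc2'
    have hd' : rG (h + k) g := by
      have e : g - k + k = g := by abel
      rwa [e] at hd
    have he : rG (g + k) (h + k) := aux_shift hc hconv hh hk hr
    exact hcon (htrans _ _ _ he (htrans _ _ _ hd' hr))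

/-- Well-definedness of the induced quasi-order on the quotient. -/
private lemma aux_wd (hc : Compatible rG)
    (hconv : ∀ s t a : G, s ∈ K → t ∈ K → rG s a → rG a t → a ∈ K)
    {g h k k' : G} (hgh : g - h ∉ K) (hk : k ∈ K) (hk' : k' ∈ K)
    (hr : rG g h) : rG (g + k) (h + k') := by
  have htotal := hc.1.2.2
  by_cases hhK : h ∈ K
  · have hg : g ∉ K := fun hm => hgh (K.sub_mem hm hhK)
    have hgneg : rG g 0 := by
      rcases htotal g 0 with h1 | h1
      · exact h1
      · exact absurd hr (aux_posAll hc hconv hg hhK h1).2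
    exact (aux_negAll hc hconv (aux_nma hg hk) (K.add_mem hhK hk')
      (aux_sgnNeg hc hconv hg hk hgneg)).1
  · by_cases hgK : g ∈ K
    · have hhpos : rG 0 h := by
        rcases htotal h 0 with h1 | h1
        · exact absurd hr (aux_negAll hc hconv hhK hgK h1).2
        · exact h1
      exact (aux_posAll hc hconv (aux_nma hhK hk') (K.add_mem hgK hk)
        (aux_sgnPos hc hconv hhK hk' hhpos)).1
    · have h1 : rG (g + (k - k')) h := aux_crux hc hconv hgK hhK hgh (K.sub_mem hk hk') hr
      have h2 := aux_shift hc hconv hhK hk' h1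
      have e : g + (k - k') + k' = g + k := by abel
      rwa [e] at h2

end Aux

/-- for a homomorphism `φ` of compatible quasi-ordered abelian
groups, `ker φ` is convex, the induced quasi-order on `G ⧸ ker φ` is
compatible, and the induced map `G ⧸ ker φ → H` is an injective homomorphism
of quasi-ordered groups, which is an embedding if `φ` reflects the quasi-order. -/
theorem factorization_through_kernel {H : Type u} [AddCommGroup H]
    (rG : G → G → Prop) (rH : H → H → Prop)
    (hcG : Compatible rG) (hcH : Compatible rH)
    (φ : G →+ H) (hφ : ∀ g h : G, rG g h → rH (φ g) (φ h)) :
    (∀ s t a : G, s ∈ φ.ker → t ∈ φ.ker → rG s a → rG a t → a ∈ φ.ker) ∧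
    ∃ R : G ⧸ φ.ker → G ⧸ φ.ker → Prop,
      (∀ g h : G, R (g : G ⧸ φ.ker) (h : G ⧸ φ.ker) ↔
        (g - h ∈ φ.ker ∨ (g - h ∉ φ.ker ∧ rG g h))) ∧
      Compatible R ∧
      ∃ ψ : G ⧸ φ.ker →+ H,
        (∀ g : G, ψ (g : G ⧸ φ.ker) = φ g) ∧
        Function.Injective ψ ∧
        (∀ a b : G ⧸ φ.ker, R a b → rH (ψ a) (ψ b)) ∧
        ((∀ g h : G, rH (φ g) (φ h) → rG g h) →
          ∀ a b : G ⧸ φ.ker, rH (ψ a) (ψ b) → R a b) := by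
  classical
  have hconv : ∀ s t a : G, s ∈ φ.ker → t ∈ φ.ker → rG s a → rG a t → a ∈ φ.ker := by
    intro s t a hs ht hsa hat
    rw [AddMonoidHom.mem_ker] at hs ht ⊢
    have h1 := hφ s a hsa
    have h2 := hφ a t hat
    rw [hs] at h1
    rw [ht] at h2
    exact hcH.2.1 _ h2 h1
  -- the induced relation on the quotient
  have hspec : ∀ g h : G,
      (∃ g' h' : G, (g : G ⧸ φ.ker) = (g' : G ⧸ φ.ker) ∧ (h : G ⧸ φ.ker) = (h' : G ⧸ φ.ker) ∧
        (g' - h' ∈ φ.ker ∨ (g' - h' ∉ φ.ker ∧ rG g' h'))) ↔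
      (g - h ∈ φ.ker ∨ (g - h ∉ φ.ker ∧ rG g h)) := by
    intro g h
    constructor
    · rintro ⟨g', h', hg, hh, hcond⟩
      have hgg' : g - g' ∈ φ.ker := by
        have h0 := QuotientAddGroup.eq.mp hg
        have e : g - g' = -(-g + g') := by abel
        rw [e]; exact φ.ker.neg_mem h0
      have hhh' : h - h' ∈ φ.ker := by
        have h0 := QuotientAddGroup.eq.mp hh
        have e : h - h' = -(-h + h') := by abel
        rw [e]; exact φ.ker.neg_mem h0
      rcases hcond with hmem | ⟨hnm, hr⟩
      · left
        have e : g - h = (g - g') + (g' - h') + -(h - h') := by abel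
        rw [e]
        exact φ.ker.add_mem (φ.ker.add_mem hgg' hmem) (φ.ker.neg_mem hhh')
      · right
        have hnmgh : g - h ∉ φ.ker := by
          intro hm
          apply hnm
          have e : g' - h' = -(g - g') + (g - h) + (h - h') := by abel
          rw [e]
          exact φ.ker.add_mem (φ.ker.add_mem (φ.ker.neg_mem hgg') hm) hhh'
        refine ⟨hnmgh, ?_⟩
        have hw := aux_wd hcG hconv hnm hgg' hhh' hr
        have e1 : g' + (g - g') = g := by abel
        have e2 : h' + (h - h') = h := by abel
        rwa [e1, e2] at hw
    · intro hcond
      exact ⟨g, h, rfl, rfl, hcond⟩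
  refine ⟨hconv, fun a b => ∃ g h : G, a = (g : G ⧸ φ.ker) ∧ b = (h : G ⧸ φ.ker) ∧
      (g - h ∈ φ.ker ∨ (g - h ∉ φ.ker ∧ rG g h)), fun g h => hspec g h, ?_, ?_⟩
  · -- Compatible R
    refine ⟨⟨?_, ?_, ?_⟩, ?_, ?_⟩
    · -- reflexive
      intro a
      refine QuotientAddGroup.induction_on a (fun g => ?_)
      exact (hspec g g).mpr (Or.inl (by simp))
    · -- transitive
      intro a b c
      refine QuotientAddGroup.induction_on a (fun g => QuotientAddGroup.induction_on b
        (fun h => QuotientAddGroup.induction_on c (fun z => ?_)))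
      intro h1 h2
      apply (hspec g z).mpr
      rcases (hspec g h).mp h1 with hm1 | ⟨hn1, hr1⟩ <;>
        rcases (hspec h z).mp h2 with hm2 | ⟨hn2, hr2⟩
      · left
        have e : g - z = (g - h) + (h - z) := by abel
        rw [e]; exact φ.ker.add_mem hm1 hm2
      · right
        have hnz : g - z ∉ φ.ker := by
          intro hm
          apply hn2
          have e : h - z = -(g - h) + (g - z) := by abel
          rw [e]; exact φ.ker.add_mem (φ.ker.neg_mem hm1) hm
        refine ⟨hnz, ?_⟩
        have hw := aux_wd hcG hconv hn2 hm1 φ.ker.zero_mem hr2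
        have e1 : h + (g - h) = g := by abel
        have e2 : z + (0 : G) = z := by abel
        rwa [e1, e2] at hw
      · right
        have hnz : g - z ∉ φ.ker := by
          intro hm
          apply hn1
          have e : g - h = (g - z) + -(h - z) := by abel
          rw [e]; exact φ.ker.add_mem hm (φ.ker.neg_mem hm2)
        refine ⟨hnz, ?_⟩
        have hm2' : z - h ∈ φ.ker := by
          have e : z - h = -(h - z) := by abel
          rw [e]; exact φ.ker.neg_mem hm2
        have hw := aux_wd hcG hconv hn1 φ.ker.zero_mem hm2' hr1
        have e1 : g + (0 : G) = g := by abel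
        have e2 : h + (z - h) = z := by abel
        rwa [e1, e2] at hw
      · by_cases hnz : g - z ∈ φ.ker
        · exact Or.inl hnz
        · exact Or.inr ⟨hnz, hcG.1.2.1 _ _ _ hr1 hr2⟩
    · -- total
      intro a b
      refine QuotientAddGroup.induction_on a (fun g => QuotientAddGroup.induction_on b
        (fun h => ?_))
      by_cases hm : g - h ∈ φ.ker
      · exact Or.inl ((hspec g h).mpr (Or.inl hm))
      · rcases hcG.1.2.2 g h with hr | hr
        · exact Or.inl ((hspec g h).mpr (Or.inr ⟨hm, hr⟩))
        · have hm' : h - g ∉ φ.ker := fun x => hm (by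
            have e : g - h = -(h - g) := by abel
            rw [e]; exact φ.ker.neg_mem x)
          exact Or.inr ((hspec h g).mpr (Or.inr ⟨hm', hr⟩))
    · -- AxQ1
      intro a
      refine QuotientAddGroup.induction_on a (fun g => ?_)
      intro h1 h2
      rw [← QuotientAddGroup.mk_zero φ.ker] at h1 h2
      have h1' := (hspec g 0).mp h1
      have h2' := (hspec 0 g).mp h2
      rw [sub_zero] at h1'
      rw [zero_sub] at h2'
      rcases h1' with hm | ⟨hnm, hr1⟩
      · exact (QuotientAddGroup.eq_zero_iff g).mpr hm
      · rcases h2' with hm | ⟨_, hr2⟩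
        · exact absurd (by simpa using φ.ker.neg_mem hm) hnm
        · have hg0 : g = 0 := hcG.2.1 g hr1 hr2
          exact (QuotientAddGroup.eq_zero_iff g).mpr (hg0 ▸ φ.ker.zero_mem)
    · -- AxQ2
      intro a b c
      refine QuotientAddGroup.induction_on a (fun g => QuotientAddGroup.induction_on b
        (fun h => QuotientAddGroup.induction_on c (fun z => ?_)))
      intro hxy hnyz
      have hhz : h - z ∉ φ.ker := by
        intro hm
        have hzh : z - h ∈ φ.ker := by
          have e : z - h = -(h - z) := by abel
          rw [e]; exact φ.ker.neg_mem hm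
        exact hnyz ⟨(hspec h z).mpr (Or.inl hm), (hspec z h).mpr (Or.inl hzh)⟩
      have hzh : z - h ∉ φ.ker := by
        intro hm
        apply hhz
        have e : h - z = -(z - h) := by abel
        rw [e]; exact φ.ker.neg_mem hm
      have hns : ¬ (rG h z ∧ rG z h) := by
        intro hx
        exact hnyz ⟨(hspec h z).mpr (Or.inr ⟨hhz, hx.1⟩),
          (hspec z h).mpr (Or.inr ⟨hzh, hx.2⟩)⟩
      rw [← QuotientAddGroup.mk_add, ← QuotientAddGroup.mk_add]
      apply (hspec (g + z) (h + z)).mpr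
      have hsub : g + z - (h + z) = g - h := by abel
      by_cases hgh : g - h ∈ φ.ker
      · exact Or.inl (by rw [hsub]; exact hgh)
      · have hr : rG g h := by
          rcases (hspec g h).mp hxy with hm | ⟨_, hr⟩
          · exact absurd hm hgh
          · exact hr
        exact Or.inr ⟨by rw [hsub]; exact hgh, hcG.2.2 g h z hr hns⟩
  · -- ψ
    refine ⟨QuotientAddGroup.kerLift φ, fun g => QuotientAddGroup.kerLift_mk φ g,
      QuotientAddGroup.kerLift_injective φ, ?_, ?_⟩
    · rintro a b ⟨g, h, rfl, rfl, hcond⟩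
      rw [QuotientAddGroup.kerLift_mk, QuotientAddGroup.kerLift_mk]
      rcases hcond with hm | ⟨_, hr⟩
      · have heq : φ g = φ h := by
          rw [AddMonoidHom.mem_ker, map_sub, sub_eq_zero] at hm
          exact hm
        rw [heq]
        exact hcH.1.1 _
      · exact hφ g h hr
    · intro hrev a b
      refine QuotientAddGroup.induction_on a (fun g => QuotientAddGroup.induction_on b
        (fun h => ?_))
      intro hr
      rw [QuotientAddGroup.kerLift_mk, QuotientAddGroup.kerLift_mk] at hr
      have hr' := hrev g h hr
      by_cases hm : g - h ∈ φ.ker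
      · exact (hspec g h).mpr (Or.inl hm)
      · exact (hspec g h).mpr (Or.inr ⟨hm, hr'⟩)
end

section
/- Let (G,≾) be a compatible quasi-ordered abelian group and H a ≾-convex subgroup of G. The quasi-order induced by ≾ on G/H is valuational if and only if G^o ⊆ H. In particular, G^o is the smallest ≾-convex subgroup of G such that the induced quasi-order on the quotient is valuational. -/
/-!
A valuation satisfies `v (-x) = v x`, so a valuational quasi-order has `x ∼ -x` for all `x`.
Conversely, a compatible quasi-order with this property is ultrametric (`x ≾ y → x + y ≾ y`),
and its valuation is the class map into the antisymmetrization, with `0` sent to `∞`.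

The quotient quasi-order is again compatible, and `g + H ∼ -g + H` means `2g ∈ H` or `g ∼ -g`.
An element with `g ≁ -g` is o-type, and an o-type `g` with `2g ∈ H` lies in `H` by convexity:
if `g ≾ 0` then `2g ≾ g ≾ 0`, and otherwise the same applies to `-g`.
-/

universe u

variable {G : Type u} [AddCommGroup G]

section Compatible

variable {r : G → G → Prop}

theorem OType.eq_zero_of_equiv_neg {g : G} (hg : OType r g) (h₁ : r g (-g)) (h₂ : r (-g) g) :
    g = 0 :=
  hg.2 (by nth_rw 2 [← hg.1 (-g) h₂ h₁]; exact add_neg_cancel g)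

theorem OType.of_not_equiv_neg (hc : Compatible r) {a : G} (ha : ¬(r a (-a) ∧ r (-a) a)) :
    OType r a := by
  obtain ⟨⟨hrefl, htrans, -⟩, hq1, hq2⟩ := hc
  refine ⟨fun h hha hah => ?_, fun h2a => ?_⟩
  · have hh : ¬(r h (-a) ∧ r (-a) h) := fun ⟨h₁, h₂⟩ =>
      ha ⟨htrans _ _ _ hah h₁, htrans _ _ _ h₂ hha⟩
    have e₁ := hq2 h a (-a) hha ha
    have e₂ := hq2 a h (-a) hah hh
    rw [add_neg_cancel, ← sub_eq_add_neg] at e₁ e₂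
    exact sub_eq_zero.mp (hq1 _ e₁ e₂)
  · rw [neg_eq_of_add_eq_zero_left h2a] at ha
    exact (ha ⟨hrefl a, hrefl a⟩).elim

theorem OType.neg_le_zero (hc : Compatible r) {g : G} (hg : OType r g) (h0g : r 0 g) :
    r (-g) 0 := by
  by_cases hg0 : g = 0
  · simpa [hg0] using hc.1.1 0
  have hneg : ¬(r g (-g) ∧ r (-g) g) := fun ⟨h₁, h₂⟩ => hg0 (hg.eq_zero_of_equiv_neg h₁ h₂)
  simpa using hc.2.2 0 g (-g) h0g hneg

theorem Compatible.mem_of_le_zero_of_add_self_mem (hc : Compatible r) {H : AddSubgroup G}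
    (hconv : ∀ s t a : G, s ∈ H → t ∈ H → r s a → r a t → a ∈ H) {g : G}
    (hg0 : r g 0) (h2g : g + g ∈ H) : g ∈ H := by
  obtain ⟨-, hq1, hq2⟩ := hc
  by_cases h0g : r 0 g
  · rw [hq1 g hg0 h0g]
    exact H.zero_mem
  · have h2g_le := hq2 g 0 g hg0 fun hsim => h0g hsim.1
    rw [zero_add] at h2g_le
    exact hconv _ _ _ h2g H.zero_mem h2g_le hg0

theorem OType.mem_of_add_self_mem (hc : Compatible r) {H : AddSubgroup G}
    (hconv : ∀ s t a : G, s ∈ H → t ∈ H → r s a → r a t → a ∈ H) {g : G}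
    (hg : OType r g) (h2g : g + g ∈ H) : g ∈ H := by
  rcases hc.1.2.2 g 0 with hg0 | h0g
  · exact hc.mem_of_le_zero_of_add_self_mem hconv hg0 h2g
  · refine neg_mem_iff.mp (hc.mem_of_le_zero_of_add_self_mem hconv (hg.neg_le_zero hc h0g) ?_)
    rw [← neg_add]
    exact H.neg_mem h2g

theorem Valuational.equiv_neg (hr : Valuational r) (x : G) : r x (-x) ∧ r (-x) x := by
  obtain ⟨Γ, _, v, ⟨-, hv, -⟩, hrv⟩ := hr
  rw [hrv, hrv, hv]
  exact ⟨le_rfl, le_rfl⟩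

theorem Compatible.zero_le_of_forall_equiv_neg (hc : Compatible r)
    (hneg : ∀ x, r x (-x) ∧ r (-x) x) (x : G) : r 0 x := by
  obtain ⟨⟨-, htrans, htotal⟩, -, hq2⟩ := hc
  refine (htotal 0 x).elim id fun hx0 => ?_
  by_contra h0x
  have hnx : ¬(r 0 (-x) ∧ r (-x) 0) := fun h => h0x (htrans _ _ _ h.1 (hneg x).2)
  have h := hq2 x 0 (-x) hx0 hnx
  rw [add_neg_cancel, zero_add] at h
  exact hnx ⟨h, htrans _ _ _ (hneg x).2 hx0⟩

theorem Compatible.add_le_right_of_forall_equiv_neg (hc : Compatible r)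
    (hneg : ∀ x, r x (-x) ∧ r (-x) x) {x y : G} (hxy : r x y) : r (x + y) y := by
  obtain ⟨⟨-, htrans, htotal⟩, -, hq2⟩ := hc
  by_contra hne
  have hyxy : r y (x + y) := (htotal (x + y) y).resolve_left hne
  have hnxyx : ¬r (x + y) x := fun h => hne (htrans _ _ _ h hxy)
  -- `-(x + y) ∼ x + y ≻ x`, so (Q2) lets us add `x` to `y ≾ -(x + y)`
  have h := hq2 y (-(x + y)) x (htrans _ _ _ hyxy (hneg _).1)
    fun h => hnxyx (htrans _ _ _ (hneg _).1 h.1)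
  rw [add_comm y x, show -(x + y) + x = -y by abel] at h
  exact hne (htrans _ _ _ h (hneg y).2)

theorem Compatible.valuational_of_forall_equiv_neg (hc : Compatible r)
    (hneg : ∀ x, r x (-x) ∧ r (-x) x) : Valuational r := by
  classical
  have h0 := hc.zero_le_of_forall_equiv_neg hneg
  have hadd {x y : G} : r x y → r (x + y) y := hc.add_le_right_of_forall_equiv_neg hneg
  obtain ⟨⟨hrefl, htrans, htotal⟩, hq1, -⟩ := hc
  let _ : Preorder G :=
    { le := fun a b => r b a
      le_refl := hrefl
      le_trans := fun a b c hab hbc => htrans _ _ _ hbc hab }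
  have _ : @Std.Total G (· ≤ ·) := ⟨fun a b => htotal b a⟩
  let v : G → WithTop (Antisymmetrization G (· ≤ ·)) := fun g =>
    if g = 0 then ⊤ else toAntisymmetrization (· ≤ ·) g
  have hv : ∀ g h, v h ≤ v g ↔ r g h := by
    intro g h
    by_cases hh : h = 0 <;> by_cases hg : g = 0 <;> simp only [v, hh, hg, if_true, if_false]
    · exact iff_of_true le_rfl (hrefl 0)
    · exact iff_of_false (WithTop.not_top_le_coe _) fun hg0 => hg (hq1 g hg0 (h0 g))
    · exact iff_of_true le_top (h0 h)
    · rw [WithTop.coe_le_coe, toAntisymmetrization_le_toAntisymmetrization_iff]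
      rfl
  refine ⟨_, inferInstance, v, ⟨fun g => by simp [v], fun g => ?_, fun g h => ?_⟩,
    fun g h => (hv g h).symm⟩
  · exact le_antisymm ((hv _ _).2 (hneg g).1) ((hv _ _).2 (hneg g).2)
  · rcases htotal g h with hgh | hhg
    · exact (min_le_right _ _).trans ((hv _ _).2 (hadd hgh))
    · refine (min_le_left _ _).trans ((hv _ _).2 ?_)
      rw [add_comm]
      exact hadd hhg

theorem Compatible.valuational_iff_forall_equiv_neg (hc : Compatible r) :
    Valuational r ↔ ∀ x, r x (-x) ∧ r (-x) x :=
  ⟨Valuational.equiv_neg, hc.valuational_of_forall_equiv_neg⟩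

end Compatible

section Quotient

variable {r : G → G → Prop} {H : AddSubgroup G} {R : G ⧸ H → G ⧸ H → Prop}

theorem quotientRel_equiv_iff
    (hR : ∀ g h : G, R (g : G ⧸ H) (h : G ⧸ H) ↔ (g - h ∈ H ∨ (g - h ∉ H ∧ r g h)))
    (a b : G) : (R a b ∧ R b a) ↔ a - b ∈ H ∨ (r a b ∧ r b a) := by
  rw [hR, hR, ← neg_sub, neg_mem_iff]
  tauto

theorem totalQO_quotientRel (hr : TotalQO r)
    (hR : ∀ g h : G, R (g : G ⧸ H) (h : G ⧸ H) ↔ (g - h ∈ H ∨ (g - h ∉ H ∧ r g h))) :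
    TotalQO R := by
  obtain ⟨-, htrans, htotal⟩ := hr
  refine ⟨fun x => ?_, fun x y z => ?_, fun x y => ?_⟩
  · obtain ⟨a, rfl⟩ := QuotientAddGroup.mk_surjective x
    exact (hR a a).2 (.inl (by simp))
  · obtain ⟨a, rfl⟩ := QuotientAddGroup.mk_surjective x
    obtain ⟨b, rfl⟩ := QuotientAddGroup.mk_surjective y
    obtain ⟨c, rfl⟩ := QuotientAddGroup.mk_surjective z
    intro hab hbc
    rcases (hR a b).1 hab with hab | ⟨-, rab⟩
    · rwa [QuotientAddGroup.eq_iff_sub_mem.2 hab]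
    rcases (hR b c).1 hbc with hbc | ⟨-, rbc⟩
    · rwa [← QuotientAddGroup.eq_iff_sub_mem.2 hbc]
    exact (hR a c).2 ((em _).imp_right fun hac => ⟨hac, htrans _ _ _ rab rbc⟩)
  · obtain ⟨a, rfl⟩ := QuotientAddGroup.mk_surjective x
    obtain ⟨b, rfl⟩ := QuotientAddGroup.mk_surjective y
    by_cases hab : a - b ∈ H
    · exact .inl ((hR a b).2 (.inl hab))
    · have hba : b - a ∉ H := by rwa [← neg_sub, neg_mem_iff]
      exact (htotal a b).imp (fun h => (hR a b).2 (.inr ⟨hab, h⟩))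
        fun h => (hR b a).2 (.inr ⟨hba, h⟩)

theorem compatible_quotientRel (hc : Compatible r)
    (hR : ∀ g h : G, R (g : G ⧸ H) (h : G ⧸ H) ↔ (g - h ∈ H ∨ (g - h ∉ H ∧ r g h))) :
    Compatible R := by
  obtain ⟨hr, hq1, hq2⟩ := hc
  refine ⟨totalQO_quotientRel hr hR, fun x => ?_, fun x y z => ?_⟩
  · obtain ⟨a, rfl⟩ := QuotientAddGroup.mk_surjective x
    intro ha0 h0a
    rw [← QuotientAddGroup.mk_zero] at ha0 h0a
    rw [QuotientAddGroup.eq_zero_iff]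
    rcases (quotientRel_equiv_iff hR a 0).1 ⟨ha0, h0a⟩ with ha | ⟨ha0, h0a⟩
    · simpa using ha
    · rw [hq1 a ha0 h0a]
      exact H.zero_mem
  · obtain ⟨a, rfl⟩ := QuotientAddGroup.mk_surjective x
    obtain ⟨b, rfl⟩ := QuotientAddGroup.mk_surjective y
    obtain ⟨c, rfl⟩ := QuotientAddGroup.mk_surjective z
    intro hab hbc
    have hnr := (not_or.1 (mt (quotientRel_equiv_iff hR b c).2 hbc)).2
    rw [← QuotientAddGroup.mk_add, ← QuotientAddGroup.mk_add, hR, add_sub_add_right_eq_sub]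
    exact ((hR a b).1 hab).imp_right fun h => ⟨h.1, hq2 a b c h.2 hnr⟩

theorem forall_quotient_equiv_neg_iff
    (hR : ∀ g h : G, R (g : G ⧸ H) (h : G ⧸ H) ↔ (g - h ∈ H ∨ (g - h ∉ H ∧ r g h))) :
    (∀ x : G ⧸ H, R x (-x) ∧ R (-x) x) ↔ ∀ a : G, a + a ∈ H ∨ (r a (-a) ∧ r (-a) a) := by
  rw [QuotientAddGroup.mk_surjective.forall]
  simp only [← QuotientAddGroup.mk_neg, quotientRel_equiv_iff hR, sub_neg_eq_add]

theorem forall_add_self_mem_or_equiv_neg_iff (hc : Compatible r)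
    (hconv : ∀ s t a : G, s ∈ H → t ∈ H → r s a → r a t → a ∈ H) :
    (∀ a : G, a + a ∈ H ∨ (r a (-a) ∧ r (-a) a)) ↔ ∀ g, OType r g → g ∈ H := by
  refine ⟨fun h g hg => hg.mem_of_add_self_mem hc hconv ?_, fun h a => ?_⟩
  · rcases h g with h2g | ⟨h₁, h₂⟩
    · exact h2g
    · rw [hg.eq_zero_of_equiv_neg h₁ h₂, add_zero]
      exact H.zero_mem
  · by_cases ha : r a (-a) ∧ r (-a) a
    · exact Or.inr ha
    · have haH := h a (.of_not_equiv_neg hc ha)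
      exact Or.inl (H.add_mem haH haH)

end Quotient

/-- for a `≾`-convex subgroup `H` of a compatible q.o.a.g, the
quasi-order induced on `G ⧸ H` is valuational iff `G^o ⊆ H`; in particular
`G^o` is the smallest such convex subgroup. -/
theorem quotient_valuational_iff_otype_subset (r : G → G → Prop)
    (hc : Compatible r) (H : AddSubgroup G)
    (hconv : ∀ s t a : G, s ∈ H → t ∈ H → r s a → r a t → a ∈ H)
    (R : G ⧸ H → G ⧸ H → Prop)
    (hR : ∀ g h : G, R (g : G ⧸ H) (h : G ⧸ H) ↔
      (g - h ∈ H ∨ (g - h ∉ H ∧ r g h))) :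
    Valuational R ↔ (∀ g : G, OType r g → g ∈ H) := by
  rw [(compatible_quotientRel hc hR).valuational_iff_forall_equiv_neg,
    forall_quotient_equiv_neg_iff hR, forall_add_self_mem_or_equiv_neg_iff hc hconv]
end

section
/- Let (G,≾) be a compatible quasi-ordered abelian group, G^o its subgroup of o-type elements, G^v = G \ G^o, and let ≾ also denote the induced quasi-order on G/G^o. Then for all g, h ∈ G: g ≾ h if and only if (g ∈ G^o ∧ h ∈ G^o ∧ g ≾ h) or (h ∈ G^v ∧ g + G^o ≾ h + G^o in G/G^o). -/
universe u

variable {G : Type u} [AddCommGroup G]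

/-! ### Auxiliary lemmas -/

lemma otype_zero (r : G → G → Prop) (q1 : AxQ1 r) : OType r 0 :=
  ⟨fun h hh hh' => q1 h hh hh', fun _ => rfl⟩

/-- Any non-o-type element satisfies `g ∼ -g` and `g ≠ 0`. -/
lemma sim_neg (r : G → G → Prop) (hc : Compatible r) {g : G} (hg : ¬ OType r g) :
    r g (-g) ∧ r (-g) g ∧ g ≠ 0 := by
  obtain ⟨⟨hrefl, htrans, _⟩, q1, q2⟩ := hc
  have gne : g ≠ 0 := by rintro rfl; exact hg (otype_zero r q1)
  rcases Classical.em (∀ h, r h g → r g h → h = g) with hA | hA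
  · -- then the 2-torsion condition must fail, so g = -g
    have hB : g + g = 0 := by
      by_contra hB
      exact hg ⟨hA, fun h2 => absurd h2 hB⟩
    have e : -g = g := by
      have := neg_eq_of_add_eq_zero_left hB
      exact this
    rw [e]
    exact ⟨hrefl g, hrefl g, gne⟩
  · push_neg at hA
    obtain ⟨h, hhg, hgh, hne⟩ := hA
    by_cases hsim : r g (-g) ∧ r (-g) g
    · exact ⟨hsim.1, hsim.2, gne⟩
    · have t1 : r (h + -g) (g + -g) := q2 h g (-g) hhg hsim
      by_cases hsim2 : r h (-g) ∧ r (-g) h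
      · exact ⟨htrans _ _ _ hgh hsim2.1, htrans _ _ _ hsim2.2 hhg, gne⟩
      · have t2 : r (g + -g) (h + -g) := q2 g h (-g) hgh hsim2
        rw [add_neg_cancel] at t1 t2
        have : h + -g = 0 := q1 _ t1 t2
        exact absurd (by rwa [add_neg_eq_zero] at this) hne

/-- From `k ≾ 0` get `0 ≾ -k`. -/
lemma rel_zero_neg (r : G → G → Prop) (q2 : AxQ2 r) {k : G} (hk0 : r k 0) : r 0 (-k) := by
  by_cases hs : r 0 (-k)
  · exact hs
  · have t := q2 k 0 (-k) hk0 (fun hx => hs hx.1)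
    rwa [add_neg_cancel, zero_add] at t

/-- A nonzero o-type element is not `∼`-equivalent to its negative. -/
lemma otype_not_sim_neg (r : G → G → Prop) {k : G} (hk : OType r k) (hne : k ≠ 0) :
    ¬(r k (-k) ∧ r (-k) k) := by
  rintro ⟨a, b⟩
  have e : -k = k := hk.1 (-k) b a
  have h2 : k + k = 0 := by nth_rewrite 2 [← e]; exact add_neg_cancel k
  exact hne (hk.2 h2)

/-- From `0 ≾ k` with `k` o-type nonzero, get `-k ≾ 0`. -/
lemma neg_rel_zero_otype (r : G → G → Prop) (q2 : AxQ2 r) {k : G} (hk : OType r k)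
    (hne : k ≠ 0) (h0k : r 0 k) : r (-k) 0 := by
  have t := q2 0 k (-k) h0k (otype_not_sim_neg r hk hne)
  rwa [zero_add, add_neg_cancel] at t

/-- An o-type element is never `∼`-equivalent to a non-o-type element. -/
lemma not_sim_ov (r : G → G → Prop) {k h : G} (hk : OType r k) (hh : ¬ OType r h) :
    ¬(r k h ∧ r h k) := by
  rintro ⟨a, b⟩
  have e : h = k := hk.1 h b a
  exact hh (by rw [e]; exact hk)

/-- Key lemma: adding an o-type element to a non-o-type element does not change
its `∼`-class. -/
lemma sim_add_otype (r : G → G → Prop) (hc : Compatible r)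
    (Go : AddSubgroup G) (hGo : ∀ g : G, g ∈ Go ↔ OType r g)
    {h k : G} (hh : ¬ OType r h) (hk : OType r k) :
    r (h + k) h ∧ r h (h + k) := by
  obtain ⟨⟨hrefl, htrans, htot⟩, q1, q2⟩ := hc
  have hcc : Compatible r := ⟨⟨hrefl, htrans, htot⟩, q1, q2⟩
  have kmem : k ∈ Go := (hGo k).2 hk
  have hnot : h ∉ Go := fun m => hh ((hGo h).1 m)
  have hkv : ¬ OType r (h + k) := by
    intro m
    exact hnot (by simpa using Go.sub_mem ((hGo (h + k)).2 m) kmem)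
  have hnv : ¬ OType r (-h) := fun m => hnot (by simpa using Go.neg_mem ((hGo (-h)).2 m))
  have sh := sim_neg r hcc hh
  have shk := sim_neg r hcc hkv
  by_cases hz : k = 0
  · subst hz; rw [add_zero]; exact ⟨hrefl h, hrefl h⟩
  rcases htot k 0 with hk0 | h0k
  · constructor
    · have cond : ¬(r 0 h ∧ r h 0) := fun ⟨a, b⟩ => sh.2.2 (q1 h b a)
      have t := q2 k 0 h hk0 cond
      rwa [zero_add, add_comm k h] at t
    · have znk : r 0 (-k) := rel_zero_neg r q2 hk0
      have onk : OType r (-k) := (hGo (-k)).1 (Go.neg_mem kmem)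
      have t := q2 0 (-k) (-h) znk (not_sim_ov r onk hnv)
      rw [zero_add] at t
      have e : -k + -h = -(h + k) := by abel
      rw [e] at t
      exact htrans _ _ _ (htrans _ _ _ sh.1 t) shk.2.1
  · constructor
    · have nk0 : r (-k) 0 := neg_rel_zero_otype r q2 hk hz h0k
      have cond : ¬(r 0 (-h) ∧ r (-h) 0) := fun ⟨a, b⟩ =>
        sh.2.2 (neg_eq_zero.1 (q1 (-h) b a))
      have t := q2 (-k) 0 (-h) nk0 cond
      rw [zero_add] at t
      have e : -k + -h = -(h + k) := by abel
      rw [e] at t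
      exact htrans _ _ _ (htrans _ _ _ shk.1 t) sh.2.1
    · have t := q2 0 k h h0k (not_sim_ov r hk hh)
      rwa [zero_add, add_comm k h] at t

/-- Key lemma: anything below an o-type element is o-type. -/
lemma otype_of_rel (r : G → G → Prop) (hc : Compatible r)
    (Go : AddSubgroup G) (hGo : ∀ g : G, g ∈ Go ↔ OType r g)
    {g h : G} (rgh : r g h) (oh : OType r h) : OType r g := by
  obtain ⟨⟨hrefl, htrans, htot⟩, q1, q2⟩ := hc
  have hcc : Compatible r := ⟨⟨hrefl, htrans, htot⟩, q1, q2⟩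
  by_contra hog
  have sg := sim_neg r hcc hog
  by_cases hz : h = 0
  · subst hz
    have cond : ¬(r 0 (-g) ∧ r (-g) 0) := fun ⟨a, b⟩ =>
      sg.2.2 (neg_eq_zero.1 (q1 (-g) b a))
    have t := q2 g 0 (-g) rgh cond
    rw [add_neg_cancel, zero_add] at t
    have rng0 : r (-g) 0 := htrans _ _ _ sg.2.1 rgh
    exact sg.2.2 (neg_eq_zero.1 (q1 (-g) rng0 t))
  · have t1 := q2 g h (-h) rgh (otype_not_sim_neg r oh hz)
    rw [add_neg_cancel] at t1
    -- t1 : r (g + -h) 0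
    have gnot : g ∉ Go := fun m => hog ((hGo g).1 m)
    have hmem : h ∈ Go := (hGo h).2 oh
    have ghnot : ¬ OType r (g + -h) := by
      intro m
      exact gnot (by simpa using Go.add_mem ((hGo (g + -h)).2 m) hmem)
    have s := sim_neg r hcc ghnot
    have t2 : r (-(g + -h)) 0 := htrans _ _ _ s.2.1 t1
    have t3 : r 0 (-(g + -h)) := rel_zero_neg r q2 t1
    exact s.2.2 (neg_eq_zero.1 (q1 _ t2 t3))

/-- in a compatible q.o.a.g with `G^o` its subgroup of o-type
elements and induced quasi-order `R` on `G ⧸ G^o`, one has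
`g ≾ h ↔ (g, h ∈ G^o ∧ g ≾ h) ∨ (h ∉ G^o ∧ g + G^o ≾ h + G^o)`. -/
theorem formula_for_the_quasiorder (r : G → G → Prop) (hc : Compatible r)
    (Go : AddSubgroup G) (hGo : ∀ g : G, g ∈ Go ↔ OType r g)
    (R : G ⧸ Go → G ⧸ Go → Prop)
    (hR : ∀ g h : G, R (g : G ⧸ Go) (h : G ⧸ Go) ↔
      (g - h ∈ Go ∨ (g - h ∉ Go ∧ r g h))) :
    ∀ g h : G, r g h ↔
      ((OType r g ∧ OType r h ∧ r g h) ∨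
        (¬ OType r h ∧ R (g : G ⧸ Go) (h : G ⧸ Go))) := by
  intro g h
  constructor
  · intro rgh
    by_cases oh : OType r h
    · exact Or.inl ⟨otype_of_rel r hc Go hGo rgh oh, oh, rgh⟩
    · refine Or.inr ⟨oh, (hR g h).2 ?_⟩
      by_cases hm : g - h ∈ Go
      · exact Or.inl hm
      · exact Or.inr ⟨hm, rgh⟩
  · rintro (⟨_, _, rgh⟩ | ⟨oh, hRgh⟩)
    · exact rgh
    · rcases (hR g h).1 hRgh with hm | ⟨_, rgh⟩
      · have ok : OType r (g - h) := (hGo (g - h)).1 hm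
        have t := (sim_add_otype r hc Go hGo oh ok).1
        have e : h + (g - h) = g := by abel
        rwa [e] at t
      · exact rgh
end

section
/- Structure theorem: Let G be an abelian group and ≾ a total quasi-order on G. Then ≾ satisfies (Q1) and (Q2) if and only if G admits a subgroup H such that: (1) H is an initial segment of G; (2) ≾ restricted to H is a total order making (H,≾) an ordered abelian group; (3) there exists a valuation v on G such that v(h) > v(g) for every h ∈ H and g ∈ G \ H, and for all g, h ∈ G \ H, g ≾ h ⇔ v(g) ≥ v(h). -/
/-!
Under (Q1) and (Q2), `g` fails to be o-type exactly when `g ≠ 0` and `g ∼ -g`, and every such `g`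
lies strictly above every o-type element. Hence the o-type elements form an initial segment closed
under addition, a subgroup `H` on which `∼` is equality, so `(H, ≾)` is an ordered group. Outside
`H`, (Q2) yields the ultrametric inequality `g + h ≾ g ∨ g + h ≾ h`, so collapsing `∼`-classes and
reversing the order turns `≾` into a valuation in which `H \ {0}` forms the top class below `∞`.
Conversely, (Q1) and (Q2) are checked case by case from `v (y + z) = min (v y) (v z)` when
`v y ≠ v z`.
-/

universe u

variable {G : Type u} [AddCommGroup G]

theorem exists_linearOrder_pullback {α : Type u} (R : α → α → Prop)
    (htrans : ∀ x y z, R x y → R y z → R x z) (htotal : ∀ x y, R x y ∨ R y x) :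
    ∃ (Γ : Type u) (_ : LinearOrder Γ) (f : α → Γ), ∀ x y, R x y ↔ f x ≤ f y := by
  classical
  let _ : Preorder α :=
    { le := R, le_refl := fun x => (htotal x x).elim id id, le_trans := htrans }
  have _ : @Std.Total α (· ≤ ·) := ⟨htotal⟩
  exact ⟨Antisymmetrization α (· ≤ ·), inferInstance, toAntisymmetrization (· ≤ ·),
    fun _ _ => Iff.rfl⟩

section Valuation

variable {A : Type u} [AddCommGroup A] {Γ : Type u}

open scoped Classical in
noncomputable def zeroToTop (f : A → Γ) (g : A) : WithTop Γ := if g = 0 then ⊤ else f g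

theorem zeroToTop_of_ne_zero (f : A → Γ) {g : A} (hg : g ≠ 0) : zeroToTop f g = f g := by
  simp [zeroToTop, hg]

theorem isValuation_zeroToTop [LinearOrder Γ] {f : A → Γ} (hneg : ∀ g, f (-g) = f g)
    (hadd : ∀ g h, min (f g) (f h) ≤ f (g + h)) : IsValuation (zeroToTop f) := by
  refine ⟨fun g => by simp [zeroToTop], fun g => ?_, fun g h => ?_⟩
  · by_cases hg : g = 0 <;> simp [zeroToTop, hg, hneg]
  by_cases hg : g = 0
  · simp [hg]
  by_cases hh : h = 0
  · simp [hh]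
  by_cases hgh : g + h = 0
  · simp [zeroToTop, hgh]
  simp only [zeroToTop_of_ne_zero f hg, zeroToTop_of_ne_zero f hh,
    zeroToTop_of_ne_zero f hgh, ← WithTop.coe_min, WithTop.coe_le_coe]
  exact hadd g h

variable [LinearOrder Γ] {v : A → WithTop Γ}

theorem IsValuation.map_add_of_lt (hv : IsValuation v) {a b : A} (hab : v a < v b) :
    v (a + b) = v a := by
  refine le_antisymm ?_ (by simpa [min_eq_left hab.le] using hv.2.2 a b)
  have h := hv.2.2 (a + b) (-b)
  rw [hv.2.1, add_neg_cancel_right, min_le_iff] at h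
  exact h.resolve_right hab.not_ge

theorem IsValuation.map_add_eq_min (hv : IsValuation v) {a b : A} (hab : v a ≠ v b) :
    v (a + b) = min (v a) (v b) := by
  rcases hab.lt_or_gt with h | h
  · rw [hv.map_add_of_lt h, min_eq_left h.le]
  · rw [add_comm, hv.map_add_of_lt h, min_eq_right h.le]

end Valuation

section OTypeSubgroup

variable {r : G → G → Prop}

theorem sim_neg_of_sim_of_ne (ht : TotalQO r) (h1 : AxQ1 r) (h2 : AxQ2 r) {a b : G}
    (hab : r a b) (hba : r b a) (hne : a ≠ b) : r b (-b) ∧ r (-b) b := by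
  by_contra hb
  have ha : ¬(r a (-b) ∧ r (-b) a) := fun h => hb ⟨ht.2.1 _ _ _ hba h.1, ht.2.1 _ _ _ h.2 hab⟩
  have e1 := h2 a b (-b) hab hb
  have e2 := h2 b a (-b) hba ha
  rw [add_neg_cancel] at e1 e2
  exact hne (add_neg_eq_zero.mp (h1 _ e1 e2))

theorem oType_iff (ht : TotalQO r) (h1 : AxQ1 r) (h2 : AxQ2 r) {g : G} :
    OType r g ↔ (r g (-g) → r (-g) g → g = 0) := by
  constructor
  · rintro ⟨hsingle, htorsion⟩ hg hg'
    exact htorsion (neg_eq_iff_add_eq_zero.mp (hsingle (-g) hg' hg))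
  · intro h
    refine ⟨fun k hkg hgk => ?_, fun h2g => ?_⟩
    · by_contra hne
      obtain ⟨hg, hg'⟩ := sim_neg_of_sim_of_ne ht h1 h2 hkg hgk hne
      obtain rfl := h hg hg'
      exact hne (h1 k hkg hgk)
    · have hneg : -g = g := neg_eq_of_add_eq_zero_right h2g
      rw [hneg] at h
      exact h (ht.1 g) (ht.1 g)

theorem not_oType_iff (ht : TotalQO r) (h1 : AxQ1 r) (h2 : AxQ2 r) {g : G} :
    ¬OType r g ↔ g ≠ 0 ∧ r g (-g) ∧ r (-g) g := by
  rw [oType_iff ht h1 h2]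
  tauto

theorem oType_neg (ht : TotalQO r) (h1 : AxQ1 r) (h2 : AxQ2 r) {g : G} (hg : OType r g) :
    OType r (-g) := by
  rw [oType_iff ht h1 h2] at hg ⊢
  rw [neg_neg, neg_eq_zero]
  exact fun h h' => hg h' h

theorem not_le_of_oType_of_not_oType (ht : TotalQO r) (h1 : AxQ1 r) (h2 : AxQ2 r) {g h : G}
    (hh : OType r h) (hg : ¬OType r g) : ¬r g h := by
  intro hgh
  obtain ⟨hg0, hgn, hng⟩ := (not_oType_iff ht h1 h2).mp hg
  have not_sim : ∀ k, k ≠ h → ¬(r k h ∧ r h k) := fun k hk hs => hk (hh.1 k hs.1 hs.2)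
  have hg_ne : g ≠ h := by rintro rfl; exact hg hh
  have hng_ne : -g ≠ h := by rintro rfl; exact hg (by simpa using oType_neg ht h1 h2 hh)
  -- `g + h ∼ -g + h` while neither is `∼ h`, the class of `h` being `{h}`; comparing `g + h`
  -- with `h` and translating by `∓g` forces one of them into that class
  have e1 : r (g + h) (-g + h) := h2 _ _ _ hgn (not_sim _ hng_ne)
  have e2 : r (-g + h) (g + h) := h2 _ _ _ hng (not_sim _ hg_ne)
  have n1 : ¬(r (g + h) h ∧ r h (g + h)) := not_sim _ (by simpa using hg0)
  have n2 : ¬(r (-g + h) h ∧ r h (-g + h)) := not_sim _ (by simpa using hg0)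
  rcases ht.2.2 (g + h) h with hle | hge
  · have e3 := h2 _ _ (-g) hle fun hs => not_sim _ hng_ne ⟨hs.2, hs.1⟩
    rw [add_neg_cancel_comm, add_comm] at e3
    exact n2 ⟨ht.2.1 _ _ _ e2 hle, e3⟩
  · have hle := ht.2.1 _ _ _ hge e1
    by_cases hs : r (-g + h) g ∧ r g (-g + h)
    · exact not_sim _ hg_ne ⟨hgh, ht.2.1 _ _ _ hle hs.1⟩
    · have e4 := h2 _ _ g hle hs
      rw [neg_add_cancel_comm, add_comm] at e4
      exact n1 ⟨e4, hge⟩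

theorem oType_add (ht : TotalQO r) (h1 : AxQ1 r) (h2 : AxQ2 r) {x y : G}
    (hx : OType r x) (hy : OType r y) : OType r (x + y) := by
  by_contra hs
  have hle : r (-x) (x + y) :=
    (ht.2.2 _ _).resolve_left (not_le_of_oType_of_not_oType ht h1 h2 (oType_neg ht h1 h2 hx) hs)
  have hny := oType_neg ht h1 h2 hy
  have e := h2 _ _ (-y) hle fun hsim => hs (hny.1 _ hsim.1 hsim.2 ▸ hny)
  rw [add_neg_cancel_right, ← neg_add] at e
  refine not_le_of_oType_of_not_oType ht h1 h2 hx (fun hneg => hs ?_) e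
  simpa using oType_neg ht h1 h2 hneg

def oTypeSubgroup (ht : TotalQO r) (h1 : AxQ1 r) (h2 : AxQ2 r) : AddSubgroup G where
  carrier := {g | OType r g}
  zero_mem' := (oType_iff ht h1 h2).mpr fun _ _ => rfl
  add_mem' := oType_add ht h1 h2
  neg_mem' := oType_neg ht h1 h2

theorem add_le_add_right_of_oType (ht : TotalQO r) (h1 : AxQ1 r) (h2 : AxQ2 r) {x y z : G}
    (hy : OType r y) (hz : OType r z) (hxy : r x y) : r (x + z) (y + z) := by
  by_cases hs : r y z ∧ r z y
  · obtain rfl : y = z := hz.1 y hs.1 hs.2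
    by_cases hy0 : y = 0
    · simpa [hy0] using hxy
    -- translate by `2y`, then by `-y`: allowed since o-type classes are singletons and, there being
    -- no 2-torsion, `y ≠ 2y` and `3y ≠ -y`
    have h2y := oType_add ht h1 h2 hy hy
    have hny := oType_neg ht h1 h2 hy
    have e1 := h2 _ _ (y + y) hxy fun hs => hy0 (by simpa using h2y.1 y hs.1 hs.2)
    have h3y : ¬(r (y + (y + y)) (-y) ∧ r (-y) (y + (y + y))) := by
      intro hs
      have h4y : (y + y) + (y + y) = 0 := by
        rw [show (y + y) + (y + y) = y + (y + y) + y by abel, hny.1 _ hs.1 hs.2, neg_add_cancel]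
      exact hy0 (hy.2 (h2y.2 h4y))
    convert h2 _ _ (-y) e1 h3y using 1 <;> abel
  · exact h2 x y z hxy hs

theorem add_le_or_add_le_of_sim_neg (ht : TotalQO r) (h2 : AxQ2 r) {g h : G}
    (hh : r h (-h) ∧ r (-h) h) (hs : r (g + h) (-(g + h)) ∧ r (-(g + h)) (g + h)) :
    r (g + h) g ∨ r (g + h) h := by
  by_contra! hc
  have hh' : r h (g + h) := (ht.2.2 _ _).resolve_left hc.2
  -- translating `h ≺ g + h` by `-h` gives `0 ≾ g`, then translating by `-(g + h)` gives
  -- `g + h ∼ -(g + h) ≾ -h ∼ h`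
  have e1 := h2 _ _ (-h) hh' fun hsim => hc.2 (ht.2.1 _ _ _ hsim.1 hh.2)
  rw [add_neg_cancel, add_neg_cancel_right] at e1
  have e2 := h2 _ _ (-(g + h)) e1 fun hsim => hc.1 (ht.2.1 _ _ _ hs.1 hsim.2)
  rw [zero_add, show g + -(g + h) = -h by abel] at e2
  exact hc.2 (ht.2.1 _ _ _ hs.1 (ht.2.1 _ _ _ e2 hh.2))

theorem oType_add_or_le_or_le (ht : TotalQO r) (h1 : AxQ1 r) (h2 : AxQ2 r) (g h : G) :
    OType r (g + h) ∨ r (g + h) g ∨ r (g + h) h := by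
  by_cases hs : OType r (g + h)
  · exact Or.inl hs
  have hs' := ((not_oType_iff ht h1 h2).mp hs).2
  by_cases hh : OType r h
  · have hg : ¬OType r g := fun hg => hs (oType_add ht h1 h2 hg hh)
    rw [add_comm] at hs' ⊢
    exact Or.inr (add_le_or_add_le_of_sim_neg ht h2 ((not_oType_iff ht h1 h2).mp hg).2 hs').symm
  · exact Or.inr (add_le_or_add_le_of_sim_neg ht h2 ((not_oType_iff ht h1 h2).mp hh).2 hs')

theorem exists_valuation_of_oType (ht : TotalQO r) (h1 : AxQ1 r) (h2 : AxQ2 r) :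
    ∃ (Γ : Type u) (_ : LinearOrder Γ) (v : G → WithTop Γ), IsValuation v ∧
      (∀ h, OType r h → ∀ g, ¬OType r g → v g < v h) ∧
      (∀ g h, ¬OType r g → ¬OType r h → (r g h ↔ v h ≤ v g)) := by
  have below : ∀ {g h : G}, OType r h → ¬OType r g → ¬r g h :=
    not_le_of_oType_of_not_oType ht h1 h2
  -- `R x y` reads `v x ≤ v y`: `≾` reversed, with all o-type elements collapsed to the top class
  obtain ⟨Γ, _, f, hf⟩ := exists_linearOrder_pullback (fun x y => OType r y ∨ r y x)
    (fun x y z hxy hyz => by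
      by_cases hz : OType r z
      · exact Or.inl hz
      · have hzy := hyz.resolve_left hz
        exact Or.inr (hxy.elim (fun hy => absurd hzy (below hy hz)) (ht.2.1 _ _ _ hzy)))
    (fun x y => (ht.2.2 y x).imp Or.inr Or.inr)
  have hneg (g : G) : f (-g) = f g := by
    by_cases hg : OType r g
    · exact le_antisymm ((hf _ _).1 (Or.inl hg)) ((hf _ _).1 (Or.inl (oType_neg ht h1 h2 hg)))
    · obtain ⟨-, hgn, hng⟩ := (not_oType_iff ht h1 h2).mp hg
      exact le_antisymm ((hf _ _).1 (Or.inr hgn)) ((hf _ _).1 (Or.inr hng))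
  have hadd (g h : G) : min (f g) (f h) ≤ f (g + h) := by
    rcases oType_add_or_le_or_le ht h1 h2 g h with hs | hs | hs
    · exact (min_le_left _ _).trans ((hf _ _).1 (Or.inl hs))
    · exact (min_le_left _ _).trans ((hf _ _).1 (Or.inr hs))
    · exact (min_le_right _ _).trans ((hf _ _).1 (Or.inr hs))
  have hne (g : G) (hg : ¬OType r g) : g ≠ 0 := ((not_oType_iff ht h1 h2).mp hg).1
  refine ⟨Γ, _, zeroToTop f, isValuation_zeroToTop hneg hadd, fun h hh g hg => ?_,
    fun g h hg hh => ?_⟩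
  · rw [zeroToTop_of_ne_zero f (hne g hg)]
    by_cases hh0 : h = 0
    · simp [zeroToTop, hh0]
    rw [zeroToTop_of_ne_zero f hh0, WithTop.coe_lt_coe, lt_iff_not_ge, ← hf]
    exact fun hgh => hgh.elim hg (below hh hg)
  · rw [zeroToTop_of_ne_zero f (hne g hg), zeroToTop_of_ne_zero f (hne h hh),
      WithTop.coe_le_coe, ← hf, or_iff_right hg]

end OTypeSubgroup

section OfValuation

variable {r : G → G → Prop} {H : AddSubgroup G} {Γ : Type u} [LinearOrder Γ]
  {v : G → WithTop Γ}

theorem axQ1_of_isInitialSegment (hinit : ∀ s ∈ H, ∀ a : G, r a s → a ∈ H)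
    (hanti : ∀ x y : G, x ∈ H → y ∈ H → r x y → r y x → x = y) : AxQ1 r :=
  fun x hx0 h0x => hanti x 0 (hinit 0 H.zero_mem x hx0) H.zero_mem hx0 h0x

theorem rel_iff_le_of_notMem (ht : TotalQO r) (hinit : ∀ s ∈ H, ∀ a : G, r a s → a ∈ H)
    (hsep : ∀ h ∈ H, ∀ g ∉ H, v g < v h)
    (hiff : ∀ g h : G, g ∉ H → h ∉ H → (r g h ↔ v h ≤ v g)) {a b : G} (hb : b ∉ H) :
    r a b ↔ v b ≤ v a := by
  by_cases ha : a ∈ H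
  · exact iff_of_true ((ht.2.2 a b).resolve_right fun h => hb (hinit a ha b h))
      (hsep a ha b hb).le
  · exact hiff a b ha hb

theorem axQ2_of_isValuation (ht : TotalQO r) (hinit : ∀ s ∈ H, ∀ a : G, r a s → a ∈ H)
    (htr : ∀ x y z : G, x ∈ H → y ∈ H → z ∈ H → r x y → r (x + z) (y + z))
    (hv : IsValuation v) (hsep : ∀ h ∈ H, ∀ g ∉ H, v g < v h)
    (hiff : ∀ g h : G, g ∉ H → h ∉ H → (r g h ↔ v h ≤ v g)) : AxQ2 r := by
  intro x y z hxy hyz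
  by_cases hH : y ∈ H ∧ z ∈ H
  · exact htr x y z (hinit y hH.1 x hxy) hH.1 hH.2 hxy
  have hne : v y ≠ v z := by
    intro he
    by_cases hy : y ∈ H
    · exact (hsep y hy z (hH ⟨hy, ·⟩)).ne' he
    by_cases hz : z ∈ H
    · exact (hsep z hz y hy).ne he
    exact hyz ⟨(hiff y z hy hz).2 he.ge, (hiff z y hz hy).2 he.le⟩
  have hval : v (y + z) = min (v y) (v z) := hv.map_add_eq_min hne
  have hyz : y + z ∉ H := by
    intro hs
    rcases not_and_or.mp hH with hw | hw
    · exact (hsep _ hs y hw).not_ge (hval ▸ min_le_left _ _)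
    · exact (hsep _ hs z hw).not_ge (hval ▸ min_le_right _ _)
  rw [rel_iff_le_of_notMem ht hinit hsep hiff hyz, hval]
  refine le_trans (le_min ?_ (min_le_right _ _)) (hv.2.2 x z)
  by_cases hy : y ∈ H
  · exact (min_le_right _ _).trans (hsep x (hinit y hy x hxy) z (hH ⟨hy, ·⟩)).le
  · exact (min_le_left _ _).trans ((rel_iff_le_of_notMem ht hinit hsep hiff hy).1 hxy)

end OfValuation

/-- Structure theorem: a total quasi-order `≾` on an abelian
group `G` satisfies (Q1) and (Q2) iff `G` has a subgroup `H` such that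
(1) `H` is an initial segment, (2) `(H, ≾)` is an ordered abelian group, and
(3) there is a valuation `v` on `G` with `v(H) > v(G \ H)` and
`g ≾ h ↔ v g ≥ v h` on `G \ H`. -/
theorem structure_theorem (r : G → G → Prop) (htqo : TotalQO r) :
    (AxQ1 r ∧ AxQ2 r) ↔
    ∃ H : AddSubgroup G,
      (∀ s ∈ H, ∀ a : G, r a s → a ∈ H) ∧
      ((∀ x y : G, x ∈ H → y ∈ H → r x y → r y x → x = y) ∧
        (∀ x y z : G, x ∈ H → y ∈ H → z ∈ H → r x y → r (x + z) (y + z))) ∧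
      ∃ (Γ : Type u) (_ : LinearOrder Γ) (v : G → WithTop Γ),
        IsValuation v ∧
        (∀ h ∈ H, ∀ g ∉ H, v g < v h) ∧
        (∀ g h : G, g ∉ H → h ∉ H → (r g h ↔ v h ≤ v g)) := by
  refine ⟨fun ⟨h1, h2⟩ => ?_, ?_⟩
  · obtain ⟨Γ, _, v, hv, hsep, hiff⟩ := exists_valuation_of_oType htqo h1 h2
    refine ⟨oTypeSubgroup htqo h1 h2, fun s hs a has => ?_,
      ⟨fun x y _ hy hxy hyx => hy.1 x hxy hyx,
        fun x y z _ hy hz hxy => add_le_add_right_of_oType htqo h1 h2 hy hz hxy⟩,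
      Γ, _, v, hv, hsep, hiff⟩
    by_contra ha
    exact not_le_of_oType_of_not_oType htqo h1 h2 hs ha has
  · rintro ⟨H, hinit, ⟨hanti, htr⟩, Γ, _, v, hv, hsep, hiff⟩
    exact ⟨axQ1_of_isInitialSegment hinit hanti,
      axQ2_of_isValuation htqo hinit htr hv hsep hiff⟩
end
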